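/- arXiv:2301.00781 — 5 statements merged into one kernel-verified Lean document; each statement's English description precedes it below -/
import Mathlib

section
/- Let H be a Hopf algebra over ℂ with universal R-matrix R. Then J := R₂₁·R is a Drinfeld twist of H: J is invertible, satisfies (ε⊗id)(J) = 1 = (id⊗ε)(J), and satisfies the cocycle identity (J⊗1)·(Δ⊗id)(J) = (1⊗J)·(id⊗Δ)(J) in H⊗H⊗H. -/
/-!
The counit conditions: applying `ε ⊗ id ⊗ id` to `(Δ ⊗ id)(R) = R₁₃R₂₃` gives
`R = (1 ⊗ (ε ⊗ id)(R)) · R`, so `(ε ⊗ id)(R) = 1` because `R` is invertible; symmetrically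
`(id ⊗ ε)(R) = 1`, and the flip exchanges the two counit maps.

The cocycle identity: by (R2), (R3) and their images under slot permutations, both sides are
products of six `R`-factors,
`J₁₂ (Δ ⊗ id)(J) = R₂₁R₁₂ · R₃₂R₃₁ · R₁₃R₂₃` and
`J₂₃ (id ⊗ Δ)(J) = R₃₂R₂₃ · R₂₁R₃₁ · R₁₃R₁₂`.
They are related by four exchange relations, each an instance of
`W₁₂ (f ⊗ id)(X) = (g ⊗ id)(X) W₁₂` or `W₂₃ (id ⊗ f)(X) = (id ⊗ g)(X) W₂₃`
for `W * f = g * W`,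
which (R1) provides for `W = R` and `W = R₂₁` with `{f, g} = {Δ, Δᵒᵖ}`.
-/

open scoped TensorProduct

noncomputable section

section HopfMaps
variable (H : Type*) [Ring H] [HopfAlgebra ℂ H]

/-- The flip `x ⊗ y ↦ y ⊗ x` on `H ⊗ H`. -/
def flip2 : (H ⊗[ℂ] H) →ₐ[ℂ] H ⊗[ℂ] H := (Algebra.TensorProduct.comm ℂ H H).toAlgHom

/-- The insertion `X ↦ X₁₂` of `H⊗H` into `H⊗H⊗H`. -/
def ins12 : (H ⊗[ℂ] H) →ₐ[ℂ] H ⊗[ℂ] (H ⊗[ℂ] H) :=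
  Algebra.TensorProduct.map (AlgHom.id ℂ H) Algebra.TensorProduct.includeLeft

/-- The insertion `X ↦ X₁₃`. -/
def ins13 : (H ⊗[ℂ] H) →ₐ[ℂ] H ⊗[ℂ] (H ⊗[ℂ] H) :=
  Algebra.TensorProduct.map (AlgHom.id ℂ H) Algebra.TensorProduct.includeRight

/-- The insertion `X ↦ X₂₃`. -/
def ins23 : (H ⊗[ℂ] H) →ₐ[ℂ] H ⊗[ℂ] (H ⊗[ℂ] H) := Algebra.TensorProduct.includeRight

/-- `f ⊗ id : H⊗H → H⊗(H⊗H)` for `f : H → H⊗H` (e.g. `Δ⊗id`). -/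
def tens1 (f : H →ₐ[ℂ] H ⊗[ℂ] H) : (H ⊗[ℂ] H) →ₐ[ℂ] H ⊗[ℂ] (H ⊗[ℂ] H) :=
  (Algebra.TensorProduct.assoc ℂ ℂ ℂ H H H).toAlgHom.comp
    (Algebra.TensorProduct.map f (AlgHom.id ℂ H))

/-- `id ⊗ f : H⊗H → H⊗(H⊗H)` for `f : H → H⊗H` (e.g. `id⊗Δ`). -/
def tens2 (f : H →ₐ[ℂ] H ⊗[ℂ] H) : (H ⊗[ℂ] H) →ₐ[ℂ] H ⊗[ℂ] (H ⊗[ℂ] H) :=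
  Algebra.TensorProduct.map (AlgHom.id ℂ H) f

/-- `ψ ⊗ ψ` for an algebra automorphism `ψ` of `H`. -/
def psipsi (ψ : H ≃ₐ[ℂ] H) : (H ⊗[ℂ] H) →ₐ[ℂ] H ⊗[ℂ] H :=
  Algebra.TensorProduct.map ψ.toAlgHom ψ.toAlgHom

/-- `Δ^ψ = (ψ⊗ψ)∘Δ∘ψ⁻¹`. -/
def Dpsi (ψ : H ≃ₐ[ℂ] H) : H →ₐ[ℂ] H ⊗[ℂ] H :=
  ((psipsi H ψ).comp (Bialgebra.comulAlgHom ℂ H)).comp ψ.symm.toAlgHom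

/-- `Δ^{op,ψ} = (ψ⊗ψ)∘Δ^{op}∘ψ⁻¹`. -/
def Dopsi (ψ : H ≃ₐ[ℂ] H) : H →ₐ[ℂ] H ⊗[ℂ] H :=
  ((psipsi H ψ).comp ((flip2 H).comp (Bialgebra.comulAlgHom ℂ H))).comp ψ.symm.toAlgHom

/-- `(ε ⊗ id)(X)`, as an element of `H`. -/
def epsid : (H ⊗[ℂ] H) →ₐ[ℂ] H :=
  (Algebra.TensorProduct.lid ℂ H).toAlgHom.comp
    (Algebra.TensorProduct.map (Bialgebra.counitAlgHom ℂ H) (AlgHom.id ℂ H))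

/-- `(id ⊗ ε)(X)`, as an element of `H`. -/
def ideps : (H ⊗[ℂ] H) →ₐ[ℂ] H :=
  (Algebra.TensorProduct.rid ℂ ℂ H).toAlgHom.comp
    (Algebra.TensorProduct.map (AlgHom.id ℂ H) (Bialgebra.counitAlgHom ℂ H))

end HopfMaps

section SlotPermutations
variable (R A : Type*) [CommSemiring R] [Semiring A] [Algebra R A]

def swap12 : A ⊗[R] (A ⊗[R] A) →ₐ[R] A ⊗[R] (A ⊗[R] A) :=
  ((Algebra.TensorProduct.assoc R R R A A A).toAlgHom.comp
    (Algebra.TensorProduct.map (Algebra.TensorProduct.comm R A A).toAlgHom (AlgHom.id R A))).comp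
    (Algebra.TensorProduct.assoc R R R A A A).symm.toAlgHom

def swap23 : A ⊗[R] (A ⊗[R] A) →ₐ[R] A ⊗[R] (A ⊗[R] A) :=
  Algebra.TensorProduct.map (AlgHom.id R A) (Algebra.TensorProduct.comm R A A).toAlgHom

def rotateLeft : A ⊗[R] (A ⊗[R] A) →ₐ[R] A ⊗[R] (A ⊗[R] A) :=
  (Algebra.TensorProduct.assoc R R R A A A).toAlgHom.comp
    (Algebra.TensorProduct.comm R A (A ⊗[R] A)).toAlgHom

def rotateRight : A ⊗[R] (A ⊗[R] A) →ₐ[R] A ⊗[R] (A ⊗[R] A) :=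
  (Algebra.TensorProduct.comm R (A ⊗[R] A) A).toAlgHom.comp
    (Algebra.TensorProduct.assoc R R R A A A).symm.toAlgHom

variable {R A}

@[simp] theorem swap12_tmul (a b c : A) :
    swap12 R A (a ⊗ₜ (b ⊗ₜ c)) = b ⊗ₜ (a ⊗ₜ c) := by
  simp [swap12]

@[simp] theorem swap23_tmul (a b c : A) :
    swap23 R A (a ⊗ₜ (b ⊗ₜ c)) = a ⊗ₜ (c ⊗ₜ b) := by
  simp [swap23]

@[simp] theorem rotateLeft_tmul (a b c : A) :
    rotateLeft R A (a ⊗ₜ (b ⊗ₜ c)) = b ⊗ₜ (c ⊗ₜ a) := by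
  simp [rotateLeft]

@[simp] theorem rotateRight_tmul (a b c : A) :
    rotateRight R A (a ⊗ₜ (b ⊗ₜ c)) = c ⊗ₜ (a ⊗ₜ b) := by
  simp [rotateRight]

end SlotPermutations

section HopfSlots
variable {H : Type*} [Ring H] [HopfAlgebra ℂ H]

theorem flip2_flip2 (X : H ⊗[ℂ] H) : flip2 H (flip2 H X) = X :=
  (Algebra.TensorProduct.comm ℂ H H).symm_apply_apply X

theorem epsid_flip2 (X : H ⊗[ℂ] H) : epsid H (flip2 H X) = ideps H X := by
  rw [← AlgHom.comp_apply]; congr 1; ext <;> simp [epsid, ideps, flip2]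

theorem ideps_flip2 (X : H ⊗[ℂ] H) : ideps H (flip2 H X) = epsid H X := by
  rw [← epsid_flip2, flip2_flip2]

theorem swap12_ins13 (X : H ⊗[ℂ] H) : swap12 ℂ H (ins13 H X) = ins23 H X := by
  rw [← AlgHom.comp_apply]; congr 1; ext <;> simp [ins13, ins23]

theorem swap12_ins23 (X : H ⊗[ℂ] H) : swap12 ℂ H (ins23 H X) = ins13 H X := by
  rw [← AlgHom.comp_apply]; congr 1; ext <;> simp [ins13, ins23, Algebra.TensorProduct.one_def]

theorem swap23_ins12 (X : H ⊗[ℂ] H) : swap23 ℂ H (ins12 H X) = ins13 H X := by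
  rw [← AlgHom.comp_apply]; congr 1; ext <;> simp [ins12, ins13, Algebra.TensorProduct.one_def]

theorem swap23_ins13 (X : H ⊗[ℂ] H) : swap23 ℂ H (ins13 H X) = ins12 H X := by
  rw [← AlgHom.comp_apply]; congr 1; ext <;> simp [ins12, ins13, Algebra.TensorProduct.one_def]

theorem rotateLeft_ins12 (X : H ⊗[ℂ] H) :
    rotateLeft ℂ H (ins12 H X) = ins13 H (flip2 H X) := by
  rw [← AlgHom.comp_apply, ← AlgHom.comp_apply]; congr 1; ext <;> simp [ins12, ins13, flip2]

theorem rotateLeft_ins13 (X : H ⊗[ℂ] H) :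
    rotateLeft ℂ H (ins13 H X) = ins23 H (flip2 H X) := by
  rw [← AlgHom.comp_apply, ← AlgHom.comp_apply]; congr 1; ext <;> simp [ins13, ins23, flip2]

theorem rotateRight_ins13 (X : H ⊗[ℂ] H) :
    rotateRight ℂ H (ins13 H X) = ins12 H (flip2 H X) := by
  rw [← AlgHom.comp_apply, ← AlgHom.comp_apply]; congr 1; ext <;> simp [ins12, ins13, flip2]

theorem rotateRight_ins23 (X : H ⊗[ℂ] H) :
    rotateRight ℂ H (ins23 H X) = ins13 H (flip2 H X) := by
  rw [← AlgHom.comp_apply, ← AlgHom.comp_apply]; congr 1; ext <;> simp [ins13, ins23, flip2]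

theorem swap12_tens1 (f : H →ₐ[ℂ] H ⊗[ℂ] H) (X : H ⊗[ℂ] H) :
    swap12 ℂ H (tens1 H f X) = tens1 H ((flip2 H).comp f) X := by
  rw [← AlgHom.comp_apply]; congr 1
  simp only [swap12, tens1, flip2, AlgHom.comp_assoc]
  rw [← AlgHom.comp_assoc _ (Algebra.TensorProduct.assoc ℂ ℂ ℂ H H H).toAlgHom]
  simp only [AlgEquiv.symm_comp, AlgHom.id_comp]
  rw [← Algebra.TensorProduct.map_comp, AlgHom.comp_id]

theorem swap23_tens2 (f : H →ₐ[ℂ] H ⊗[ℂ] H) (X : H ⊗[ℂ] H) :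
    swap23 ℂ H (tens2 H f X) = tens2 H ((flip2 H).comp f) X := by
  rw [← AlgHom.comp_apply]; congr 1
  simp only [swap23, tens2, flip2, ← Algebra.TensorProduct.map_id_comp]

theorem rotateLeft_tens2 (f : H →ₐ[ℂ] H ⊗[ℂ] H) (X : H ⊗[ℂ] H) :
    rotateLeft ℂ H (tens2 H f X) = tens1 H f (flip2 H X) := by
  rw [← AlgHom.comp_apply, ← AlgHom.comp_apply]; congr 1
  simp only [rotateLeft, tens2, tens1, flip2, AlgHom.comp_assoc,
    Algebra.TensorProduct.comm_comp_map]

theorem rotateRight_tens1 (f : H →ₐ[ℂ] H ⊗[ℂ] H) (X : H ⊗[ℂ] H) :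
    rotateRight ℂ H (tens1 H f X) = tens2 H f (flip2 H X) := by
  rw [← AlgHom.comp_apply, ← AlgHom.comp_apply]; congr 1
  simp only [rotateRight, tens2, tens1, flip2, AlgHom.comp_assoc]
  rw [← AlgHom.comp_assoc _ (Algebra.TensorProduct.assoc ℂ ℂ ℂ H H H).toAlgHom]
  simp only [AlgEquiv.symm_comp, AlgHom.id_comp, Algebra.TensorProduct.comm_comp_map]

theorem ins12_eq_assoc (W : H ⊗[ℂ] H) :
    ins12 H W = Algebra.TensorProduct.assoc ℂ ℂ ℂ H H H (W ⊗ₜ 1) := by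
  induction W using TensorProduct.induction_on with
  | zero => simp
  | tmul a b => simp [ins12]
  | add W W' hW hW' => simp only [map_add, TensorProduct.add_tmul, hW, hW']

theorem tens1_tmul (f : H →ₐ[ℂ] H ⊗[ℂ] H) (x y : H) :
    tens1 H f (x ⊗ₜ y) = Algebra.TensorProduct.assoc ℂ ℂ ℂ H H H (f x ⊗ₜ y) := by
  simp [tens1]

theorem ins12_mul_tens1 (W : H ⊗[ℂ] H) (f g : H →ₐ[ℂ] H ⊗[ℂ] H)
    (hW : ∀ x, W * f x = g x * W) (Y : H ⊗[ℂ] H) :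
    ins12 H W * tens1 H f Y = tens1 H g Y * ins12 H W := by
  induction Y using TensorProduct.induction_on with
  | zero => simp
  | tmul x y =>
    rw [ins12_eq_assoc, tens1_tmul, tens1_tmul, ← map_mul, ← map_mul,
      Algebra.TensorProduct.tmul_mul_tmul, Algebra.TensorProduct.tmul_mul_tmul, hW, one_mul,
      mul_one]
  | add Y Y' hY hY' => simp only [map_add, mul_add, add_mul, hY, hY']

theorem ins23_mul_tens2 (W : H ⊗[ℂ] H) (f g : H →ₐ[ℂ] H ⊗[ℂ] H)
    (hW : ∀ x, W * f x = g x * W) (Y : H ⊗[ℂ] H) :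
    ins23 H W * tens2 H f Y = tens2 H g Y * ins23 H W := by
  induction Y using TensorProduct.induction_on with
  | zero => simp
  | tmul x y =>
    simp only [ins23, tens2, Algebra.TensorProduct.includeRight_apply,
      Algebra.TensorProduct.map_tmul, AlgHom.id_apply, Algebra.TensorProduct.tmul_mul_tmul, hW,
      one_mul, mul_one]
  | add Y Y' hY hY' => simp only [map_add, mul_add, add_mul, hY, hY']

end HopfSlots

section Counit
variable (H : Type*) [Ring H] [HopfAlgebra ℂ H]

def epsidid : H ⊗[ℂ] (H ⊗[ℂ] H) →ₐ[ℂ] H ⊗[ℂ] H :=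
  (Algebra.TensorProduct.map (epsid H) (AlgHom.id ℂ H)).comp
    (Algebra.TensorProduct.assoc ℂ ℂ ℂ H H H).symm.toAlgHom

def idideps : H ⊗[ℂ] (H ⊗[ℂ] H) →ₐ[ℂ] H ⊗[ℂ] H :=
  Algebra.TensorProduct.map (AlgHom.id ℂ H) (ideps H)

variable {H}

theorem epsid_comp_comul : (epsid H).comp (Bialgebra.comulAlgHom ℂ H) = AlgHom.id ℂ H := by
  ext x
  have h : Algebra.TensorProduct.map (Bialgebra.counitAlgHom ℂ H) (AlgHom.id ℂ H)
      (Coalgebra.comul x) = 1 ⊗ₜ x := Coalgebra.rTensor_counit_comul x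
  simp [epsid, h]

theorem ideps_comp_comul : (ideps H).comp (Bialgebra.comulAlgHom ℂ H) = AlgHom.id ℂ H := by
  ext x
  have h : Algebra.TensorProduct.map (AlgHom.id ℂ H) (Bialgebra.counitAlgHom ℂ H)
      (Coalgebra.comul x) = x ⊗ₜ 1 := Coalgebra.lTensor_counit_comul x
  simp [ideps, h]

theorem epsidid_tens1_comul (X : H ⊗[ℂ] H) :
    epsidid H (tens1 H (Bialgebra.comulAlgHom ℂ H) X) = X := by
  rw [← AlgHom.comp_apply]
  simp only [epsidid, tens1, AlgHom.comp_assoc]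
  rw [← AlgHom.comp_assoc _ (Algebra.TensorProduct.assoc ℂ ℂ ℂ H H H).toAlgHom]
  simp only [AlgEquiv.symm_comp, AlgHom.id_comp]
  rw [← Algebra.TensorProduct.map_comp, epsid_comp_comul, AlgHom.comp_id,
    Algebra.TensorProduct.map_id, AlgHom.id_apply]

theorem idideps_tens2_comul (X : H ⊗[ℂ] H) :
    idideps H (tens2 H (Bialgebra.comulAlgHom ℂ H) X) = X := by
  rw [← AlgHom.comp_apply, idideps, tens2, ← Algebra.TensorProduct.map_id_comp,
    ideps_comp_comul, Algebra.TensorProduct.map_id, AlgHom.id_apply]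

theorem epsidid_ins13 (X : H ⊗[ℂ] H) : epsidid H (ins13 H X) = 1 ⊗ₜ epsid H X := by
  rw [← Algebra.TensorProduct.includeRight_apply, ← AlgHom.comp_apply, ← AlgHom.comp_apply]
  congr 1; ext <;> simp [epsidid, epsid, ins13, TensorProduct.smul_tmul']

theorem epsidid_ins23 (X : H ⊗[ℂ] H) : epsidid H (ins23 H X) = X := by
  rw [← AlgHom.comp_apply, ← AlgHom.id_apply (R := ℂ) X]
  congr 1; ext <;> simp [epsidid, epsid, ins23]

theorem idideps_ins13 (X : H ⊗[ℂ] H) : idideps H (ins13 H X) = ideps H X ⊗ₜ 1 := by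
  rw [← Algebra.TensorProduct.includeLeft_apply (S := ℂ), ← AlgHom.comp_apply,
    ← AlgHom.comp_apply]
  congr 1; ext <;> simp [idideps, ideps, ins13]

theorem idideps_ins12 (X : H ⊗[ℂ] H) : idideps H (ins12 H X) = X := by
  rw [← AlgHom.comp_apply, ← AlgHom.id_apply (R := ℂ) X]
  congr 1; ext <;> simp [idideps, ideps, ins12]

end Counit

theorem cocycle_of_exchange {M : Type*} [Semigroup M] {A B C D E F : M}
    (h₁ : B * (C * E) = (E * C) * B) (h₂ : A * (E * C) = (C * E) * A)
    (h₃ : B * (F * D) = (D * F) * B) (h₄ : D * (A * E) = (E * A) * D) :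
    (A * B) * ((C * E) * (F * D)) = (C * D) * ((A * E) * (F * B)) :=
  calc (A * B) * ((C * E) * (F * D))
      = A * (B * (C * E)) * (F * D) := by simp only [mul_assoc]
    _ = A * ((E * C) * B) * (F * D) := by rw [h₁]
    _ = (A * (E * C)) * (B * (F * D)) := by simp only [mul_assoc]
    _ = ((C * E) * A) * ((D * F) * B) := by rw [h₂, h₃]
    _ = C * ((E * A) * D) * (F * B) := by simp only [mul_assoc]
    _ = C * (D * (A * E)) * (F * B) := by rw [h₄]
    _ = (C * D) * ((A * E) * (F * B)) := by simp only [mul_assoc]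

section UniversalRMatrix
variable {H : Type*} [Ring H] [HopfAlgebra ℂ H] {R : H ⊗[ℂ] H}

theorem epsid_eq_one_of_isUnit (hRunit : IsUnit R)
    (hR2 : tens1 H (Bialgebra.comulAlgHom ℂ H) R = ins13 H R * ins23 H R) :
    epsid H R = 1 := by
  have h := congr(epsidid H $hR2)
  rw [epsidid_tens1_comul, map_mul, epsidid_ins13, epsidid_ins23] at h
  have h1 : (1 : H) ⊗ₜ[ℂ] epsid H R = 1 :=
    hRunit.mul_right_cancel (by rw [one_mul, ← h])
  simpa [epsid] using congr(epsid H $h1)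

theorem ideps_eq_one_of_isUnit (hRunit : IsUnit R)
    (hR3 : tens2 H (Bialgebra.comulAlgHom ℂ H) R = ins13 H R * ins12 H R) :
    ideps H R = 1 := by
  have h := congr(idideps H $hR3)
  rw [idideps_tens2_comul, map_mul, idideps_ins13, idideps_ins12] at h
  have h1 : ideps H R ⊗ₜ[ℂ] (1 : H) = 1 :=
    hRunit.mul_right_cancel (by rw [one_mul, ← h])
  simpa [ideps] using congr(ideps H $h1)

theorem tens1_comul_flip2
    (hR3 : tens2 H (Bialgebra.comulAlgHom ℂ H) R = ins13 H R * ins12 H R) :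
    tens1 H (Bialgebra.comulAlgHom ℂ H) (flip2 H R) =
      ins23 H (flip2 H R) * ins13 H (flip2 H R) := by
  have h := congr(rotateLeft ℂ H $hR3)
  rwa [rotateLeft_tens2, map_mul, rotateLeft_ins13, rotateLeft_ins12] at h

theorem tens2_comul_flip2
    (hR2 : tens1 H (Bialgebra.comulAlgHom ℂ H) R = ins13 H R * ins23 H R) :
    tens2 H (Bialgebra.comulAlgHom ℂ H) (flip2 H R) =
      ins12 H (flip2 H R) * ins13 H (flip2 H R) := by
  have h := congr(rotateRight ℂ H $hR2)
  rwa [rotateRight_tens1, map_mul, rotateRight_ins13, rotateRight_ins23] at h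

theorem cocycle_flip2_mul
    (hR1 : ∀ x : H,
      R * Bialgebra.comulAlgHom ℂ H x = flip2 H (Bialgebra.comulAlgHom ℂ H x) * R)
    (hR2 : tens1 H (Bialgebra.comulAlgHom ℂ H) R = ins13 H R * ins23 H R)
    (hR3 : tens2 H (Bialgebra.comulAlgHom ℂ H) R = ins13 H R * ins12 H R) :
    ins12 H (flip2 H R * R) * tens1 H (Bialgebra.comulAlgHom ℂ H) (flip2 H R * R) =
      ins23 H (flip2 H R * R) * tens2 H (Bialgebra.comulAlgHom ℂ H) (flip2 H R * R) := by
  set Δ := Bialgebra.comulAlgHom ℂ H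
  set R' := flip2 H R
  have hR1' : ∀ x, R' * flip2 H (Δ x) = Δ x * R' := fun x => by
    simpa only [map_mul, flip2_flip2] using congr(flip2 H $(hR1 x))
  have hΔ₁R' : tens1 H Δ R' = ins23 H R' * ins13 H R' := tens1_comul_flip2 hR3
  have hΔ₂R' : tens2 H Δ R' = ins12 H R' * ins13 H R' := tens2_comul_flip2 hR2
  have hΔop₁R : tens1 H ((flip2 H).comp Δ) R = ins23 H R * ins13 H R := by
    rw [← swap12_tens1, hR2, map_mul, swap12_ins13, swap12_ins23]
  have hΔop₁R' : tens1 H ((flip2 H).comp Δ) R' = ins13 H R' * ins23 H R' := by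
    rw [← swap12_tens1, hΔ₁R', map_mul, swap12_ins13, swap12_ins23]
  have hΔop₂R' : tens2 H ((flip2 H).comp Δ) R' = ins13 H R' * ins12 H R' := by
    rw [← swap23_tens2, hΔ₂R', map_mul, swap23_ins12, swap23_ins13]
  simp only [map_mul, hΔ₁R', hR2, hΔ₂R', hR3]
  -- `A, …, F` are `R₂₁, R, R₂₁, R, R₂₁, R` placed in the slots `12, 12, 23, 23, 13, 13`.
  apply cocycle_of_exchange
  · simpa only [hΔ₁R', hΔop₁R'] using ins12_mul_tens1 R Δ ((flip2 H).comp Δ) hR1 R'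
  · simpa only [hΔ₁R', hΔop₁R'] using ins12_mul_tens1 R' ((flip2 H).comp Δ) Δ hR1' R'
  · simpa only [hR2, hΔop₁R] using ins12_mul_tens1 R Δ ((flip2 H).comp Δ) hR1 R
  · simpa only [hΔ₂R', hΔop₂R'] using ins23_mul_tens2 R Δ ((flip2 H).comp Δ) hR1 R'

end UniversalRMatrix

/-- Let `H` be a Hopf algebra over ℂ with universal R-matrix `R`.  Then
`J := R₂₁ R` is a Drinfeld twist of `H`: `J` is invertible, `(ε⊗id)(J) = 1 = (id⊗ε)(J)`,
and the cocycle identity `(J⊗1)(Δ⊗id)(J) = (1⊗J)(id⊗Δ)(J)` holds in `H⊗H⊗H`. -/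
theorem statement1 {H : Type*} [Ring H] [HopfAlgebra ℂ H]
    (R : H ⊗[ℂ] H) (hRunit : IsUnit R)
    (hR1 : ∀ x : H,
      R * Bialgebra.comulAlgHom ℂ H x = flip2 H (Bialgebra.comulAlgHom ℂ H x) * R)
    (hR2 : tens1 H (Bialgebra.comulAlgHom ℂ H) R = ins13 H R * ins23 H R)
    (hR3 : tens2 H (Bialgebra.comulAlgHom ℂ H) R = ins13 H R * ins12 H R) :
    IsUnit (flip2 H R * R) ∧
    epsid H (flip2 H R * R) = 1 ∧
    ideps H (flip2 H R * R) = 1 ∧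
    ins12 H (flip2 H R * R) * tens1 H (Bialgebra.comulAlgHom ℂ H) (flip2 H R * R) =
      ins23 H (flip2 H R * R) * tens2 H (Bialgebra.comulAlgHom ℂ H) (flip2 H R * R) := by
  have hε₁ := epsid_eq_one_of_isUnit hRunit hR2
  have hε₂ := ideps_eq_one_of_isUnit hRunit hR3
  refine ⟨(hRunit.map (flip2 H)).mul hRunit, ?_, ?_, cocycle_flip2_mul hR1 hR2 hR3⟩
  · rw [map_mul, epsid_flip2, hε₁, hε₂, mul_one]
  · rw [map_mul, ideps_flip2, hε₁, hε₂, mul_one]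
end
end

section
/- Let H be a ℂ-algebra, ψ an algebra automorphism of H, R ∈ H⊗H, B a ℂ-algebra with an algebra homomorphism δ : B → B⊗H, and K ∈ B⊗H. Set δ^ψ := (id_B⊗ψ)∘δ, R^ψ := (ψ⊗id)(R) and R^{ψψ} := (ψ⊗ψ)(R). Assume the universal K-matrix axioms (K1) K·δ(b) = δ^ψ(b)·K for all b ∈ B, and (K2) (δ⊗id_H)(K) = (R^ψ)₃₂·K₁₃·R₂₃ in B⊗H⊗H. Then K satisfies the ψ-twisted universal reflection equation K₁₂·(R^ψ)₃₂·K₁₃·R₂₃ = (R^{ψψ})₃₂·K₁₃·(R^ψ)₂₃·K₁₂ in B⊗H⊗H. -/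
open scoped TensorProduct

noncomputable section

section ComodMaps
variable (B H : Type*) [Ring B] [Algebra ℂ B] [Ring H] [Algebra ℂ H]

/-- The insertion `K ↦ K₁₂` of `B⊗H` into `B⊗H⊗H`. -/
def K12m : (B ⊗[ℂ] H) →ₐ[ℂ] B ⊗[ℂ] (H ⊗[ℂ] H) :=
  Algebra.TensorProduct.map (AlgHom.id ℂ B) Algebra.TensorProduct.includeLeft

/-- The insertion `K ↦ K₁₃` of `B⊗H` into `B⊗H⊗H`. -/
def K13m : (B ⊗[ℂ] H) →ₐ[ℂ] B ⊗[ℂ] (H ⊗[ℂ] H) :=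
  Algebra.TensorProduct.map (AlgHom.id ℂ B) Algebra.TensorProduct.includeRight

/-- The insertion `X ↦ X₂₃` of `H⊗H` into `B⊗H⊗H`. -/
def i23 : (H ⊗[ℂ] H) →ₐ[ℂ] B ⊗[ℂ] (H ⊗[ℂ] H) := Algebra.TensorProduct.includeRight

/-- The insertion `X ↦ X₃₂` of `H⊗H` into `B⊗H⊗H`. -/
def i32 : (H ⊗[ℂ] H) →ₐ[ℂ] B ⊗[ℂ] (H ⊗[ℂ] H) :=
  (Algebra.TensorProduct.includeRight : (H ⊗[ℂ] H) →ₐ[ℂ] B ⊗[ℂ] (H ⊗[ℂ] H)).comp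
    (Algebra.TensorProduct.comm ℂ H H).toAlgHom

/-- `δ ⊗ id_H : B⊗H → B⊗(H⊗H)` for `δ : B → B⊗H`. -/
def delta1 (δ : B →ₐ[ℂ] B ⊗[ℂ] H) : (B ⊗[ℂ] H) →ₐ[ℂ] B ⊗[ℂ] (H ⊗[ℂ] H) :=
  (Algebra.TensorProduct.assoc ℂ ℂ ℂ B H H).toAlgHom.comp
    (Algebra.TensorProduct.map δ (AlgHom.id ℂ H))

/-- `δ^ψ = (id_B ⊗ ψ) ∘ δ`. -/
def dpsi (ψ : H ≃ₐ[ℂ] H) (δ : B →ₐ[ℂ] B ⊗[ℂ] H) : B →ₐ[ℂ] B ⊗[ℂ] H :=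
  (Algebra.TensorProduct.map (AlgHom.id ℂ B) ψ.toAlgHom).comp δ

end ComodMaps

/-- `R^ψ = (ψ⊗id)(R)`. -/
def Rpsi (H : Type*) [Ring H] [Algebra ℂ H] (ψ : H ≃ₐ[ℂ] H) (R : H ⊗[ℂ] H) : H ⊗[ℂ] H :=
  Algebra.TensorProduct.map ψ.toAlgHom (AlgHom.id ℂ H) R

/-- `R^{ψψ} = (ψ⊗ψ)(R)`. -/
def Rpsipsi (H : Type*) [Ring H] [Algebra ℂ H] (ψ : H ≃ₐ[ℂ] H) (R : H ⊗[ℂ] H) : H ⊗[ℂ] H :=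
  Algebra.TensorProduct.map ψ.toAlgHom ψ.toAlgHom R

/-!
Multiplying (K2) on the left by `K₁₂` and using (K1) in the first two tensor legs gives
`K₁₂ (δ ⊗ id)(K) = (δ^ψ ⊗ id)(K) K₁₂`. Since `δ^ψ ⊗ id = (id ⊗ ψ ⊗ id) ∘ (δ ⊗ id)`, the right-hand
side is `id ⊗ ψ ⊗ id` applied to (K2), which turns `(R^ψ)₃₂ K₁₃ R₂₃` into
`(R^{ψψ})₃₂ K₁₃ (R^ψ)₂₃`.
-/

open Algebra.TensorProduct

section KMatrix

variable {B H : Type*} [Ring B] [Algebra ℂ B] [Ring H] [Algebra ℂ H]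

theorem delta1_tmul (δ : B →ₐ[ℂ] B ⊗[ℂ] H) (b : B) (h : H) :
    delta1 B H δ (b ⊗ₜ h) = K12m B H (δ b) * i23 B H (1 ⊗ₜ h) := by
  change Algebra.TensorProduct.assoc ℂ ℂ ℂ B H H (δ b ⊗ₜ h) = _
  induction δ b using TensorProduct.induction_on with
  | zero => simp
  | tmul b' k => simp [K12m, i23]
  | add x y hx hy => simp only [TensorProduct.add_tmul, map_add, add_mul, hx, hy]

theorem commute_K12m_i23_one_tmul (y : B ⊗[ℂ] H) (h : H) :
    Commute (K12m B H y) (i23 B H (1 ⊗ₜ h)) := by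
  induction y using TensorProduct.induction_on with
  | zero => simp
  | tmul b k => simp [Commute, SemiconjBy, K12m, i23]
  | add x y hx hy => simpa using hx.add_left hy

theorem K12m_mul_delta1 {δ δ' : B →ₐ[ℂ] B ⊗[ℂ] H} {K : B ⊗[ℂ] H}
    (hK : ∀ b, K * δ b = δ' b * K) (x : B ⊗[ℂ] H) :
    K12m B H K * delta1 B H δ x = delta1 B H δ' x * K12m B H K := by
  induction x using TensorProduct.induction_on with
  | zero => simp
  | tmul b h =>
    rw [delta1_tmul, delta1_tmul, ← mul_assoc, ← map_mul, hK, map_mul, mul_assoc,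
      (commute_K12m_i23_one_tmul K h).eq, mul_assoc]
  | add x y hx hy => simp only [map_add, mul_add, add_mul, hx, hy]

variable (B H) in
def mapMid (φ : H →ₐ[ℂ] H) : B ⊗[ℂ] (H ⊗[ℂ] H) →ₐ[ℂ] B ⊗[ℂ] (H ⊗[ℂ] H) :=
  map (AlgHom.id ℂ B) (map φ (AlgHom.id ℂ H))

variable (φ : H →ₐ[ℂ] H)

theorem mapMid_comp_delta1 (δ : B →ₐ[ℂ] B ⊗[ℂ] H) :
    (mapMid B H φ).comp (delta1 B H δ) = delta1 B H ((map (AlgHom.id ℂ B) φ).comp δ) := by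
  ext b : 2
  · simp only [mapMid, delta1, AlgHom.coe_comp, AlgEquiv.coe_toAlgHom, Function.comp_apply,
      includeLeft_apply, map_tmul, AlgHom.coe_id, id_eq]
    induction δ b using TensorProduct.induction_on with
    | zero => simp
    | tmul b' k => simp
    | add x y hx hy => simp only [TensorProduct.add_tmul, map_add, hx, hy]
  · simp [mapMid, delta1, Algebra.TensorProduct.one_def]

theorem mapMid_i32 (x : H ⊗[ℂ] H) :
    mapMid B H φ (i32 B H x) = i32 B H (map (AlgHom.id ℂ H) φ x) := by
  induction x using TensorProduct.induction_on with
  | zero => simp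
  | tmul a c => simp [mapMid, i32]
  | add x y hx hy => simp only [map_add, hx, hy]

theorem mapMid_K13m (y : B ⊗[ℂ] H) : mapMid B H φ (K13m B H y) = K13m B H y := by
  induction y using TensorProduct.induction_on with
  | zero => simp
  | tmul b k => simp [mapMid, K13m]
  | add x y hx hy => simp only [map_add, hx, hy]

theorem mapMid_i23 (x : H ⊗[ℂ] H) :
    mapMid B H φ (i23 B H x) = i23 B H (map φ (AlgHom.id ℂ H) x) := by
  induction x using TensorProduct.induction_on with
  | zero => simp
  | tmul a c => simp [mapMid, i23]
  | add x y hx hy => simp only [map_add, hx, hy]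

end KMatrix

theorem map_id_Rpsi {H : Type*} [Ring H] [Algebra ℂ H] (ψ : H ≃ₐ[ℂ] H) (R : H ⊗[ℂ] H) :
    map (AlgHom.id ℂ H) ψ.toAlgHom (Rpsi H ψ R) = Rpsipsi H ψ R := by
  rw [Rpsi, Rpsipsi, ← AlgHom.comp_apply, ← map_comp]
  rfl

/-- Let `H` be a ℂ-algebra, `ψ` an algebra automorphism of `H`,
`R ∈ H⊗H`, `B` a ℂ-algebra with an algebra homomorphism `δ : B → B⊗H`, and `K ∈ B⊗H`.
Assume the universal K-matrix axioms (K1) `K δ(b) = δ^ψ(b) K` for all `b ∈ B` and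
(K2) `(δ⊗id)(K) = (R^ψ)₃₂ K₁₃ R₂₃`.  Then `K` satisfies the ψ-twisted universal reflection
equation `K₁₂ (R^ψ)₃₂ K₁₃ R₂₃ = (R^{ψψ})₃₂ K₁₃ (R^ψ)₂₃ K₁₂` in `B⊗H⊗H`. -/
theorem statement2 (B H : Type*) [Ring B] [Algebra ℂ B] [Ring H] [Algebra ℂ H]
    (ψ : H ≃ₐ[ℂ] H) (R : H ⊗[ℂ] H) (δ : B →ₐ[ℂ] B ⊗[ℂ] H) (K : B ⊗[ℂ] H)
    (hK1 : ∀ b : B, K * δ b = dpsi B H ψ δ b * K)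
    (hK2 : delta1 B H δ K = i32 B H (Rpsi H ψ R) * K13m B H K * i23 B H R) :
    K12m B H K * i32 B H (Rpsi H ψ R) * K13m B H K * i23 B H R =
      i32 B H (Rpsipsi H ψ R) * K13m B H K * i23 B H (Rpsi H ψ R) * K12m B H K := by
  calc K12m B H K * i32 B H (Rpsi H ψ R) * K13m B H K * i23 B H R
      = K12m B H K * delta1 B H δ K := by rw [hK2]; simp only [mul_assoc]
    _ = delta1 B H (dpsi B H ψ δ) K * K12m B H K := K12m_mul_delta1 hK1 K
    _ = mapMid B H ψ.toAlgHom (delta1 B H δ K) * K12m B H K := by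
      rw [dpsi, ← mapMid_comp_delta1]; rfl
    _ = i32 B H (Rpsipsi H ψ R) * K13m B H K * i23 B H (Rpsi H ψ R) * K12m B H K := by
      rw [hK2, map_mul, map_mul, mapMid_i32, mapMid_K13m, mapMid_i23, map_id_Rpsi, Rpsi]
end
end

section
/- For every j ∈ {1/2, 1, 3/2, …}, the matrix R^{(1/2,j)}(q^{−j−1/2}) has rank 2j and admits the factorization R^{(1/2,j)}(q^{−j−1/2}) = 𝓔̄^{(j−1/2)}·𝓗̄^{(j−1/2)}·𝓕̄^{(j−1/2)}, where 𝓗̄^{(j−1/2)} is the diagonal (2j)×(2j) matrix with entries 𝓗̄_n = (∏_{k=0}^{2j−2} c(q^{−k−1}))·(q−q⁻¹)·B_{j,−j+n}/(𝓔̄^{(j−1/2)}_{n+2j+1,n}·𝓕̄^{(j−1/2)}_{n,n+1}) for n = 1,…,2j. -/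
noncomputable section
open Matrix
open scoped Kronecker

/-- The q-number `[n]_q`. -/
def qint (q : ℂ) (n : ℤ) : ℂ := (q ^ n - q ^ (-n)) / (q - q⁻¹)

section CMat
variable (q t : ℂ) (s : ℕ → ℕ → ℂ)

/-- Diagonal entries `𝓔_{1+n,1+n}` of the intertwiner `𝓔^{(j+1/2)}` (here `N = 2j`, and
`s a b` is the fixed choice of square root of `[a]_q [b]_q`, so that
`B_{j,m} = s (j+m) (j-m+1)` and `A_{j,m} = B_{j,m+1} = s (j+m+1) (j-m)`). -/
def Ediag (N k : ℕ) : ℂ := ∏ p ∈ Finset.range k, s (N - p) (p + 1) / s (N + 1 - p) (p + 1)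

/-- Lower-block entries `𝓔_{2j+2+k,2+k}` of the intertwiner `𝓔^{(j+1/2)}`. -/
def Eoff (N k : ℕ) : ℂ := qint q ((k : ℤ) + 1) * Ediag s N k / s (N + 1 - k) (k + 1)

/-- The intertwiner `𝓔^{(j+1/2)} : ℂ^{2j+2} → ℂ²⊗ℂ^{2j+1}`, `N = 2j`; rows are indexed by
`(ε,k)` with `ε ∈ {↑,↓}` and `k = j - m`, columns by `|j+1/2, j+1/2⟩, …, |j+1/2, -j-1/2⟩`. -/
def Emat (N : ℕ) : Matrix (Fin 2 × Fin (N + 1)) (Fin (N + 2)) ℂ := fun r c =>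
  if r.1 = 0 then (if (c : ℕ) = (r.2 : ℕ) then Ediag s N (r.2 : ℕ) else 0)
  else (if (c : ℕ) = (r.2 : ℕ) + 1 then Eoff q s N (r.2 : ℕ) else 0)

/-- The entries `𝓕_{n,n+2j}` of the pseudo-inverse `𝓕^{(j+1/2)}` (here `k = n-1`). -/
def Foff (N k : ℕ) : ℂ := Eoff q s N (k - 1) / ((Ediag s N k) ^ 2 + (Eoff q s N (k - 1)) ^ 2)

/-- The pseudo-inverse `𝓕^{(j+1/2)} : ℂ²⊗ℂ^{2j+1} → ℂ^{2j+2}`, `N = 2j`. -/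
def Fmat (N : ℕ) : Matrix (Fin (N + 2)) (Fin 2 × Fin (N + 1)) ℂ := fun r c =>
  if (r : ℕ) = 0 then (if c.1 = 0 ∧ (c.2 : ℕ) = 0 then 1 else 0)
  else if (r : ℕ) = N + 1 then (if c.1 = 1 ∧ (c.2 : ℕ) = N then (Eoff q s N N)⁻¹ else 0)
  else if c.1 = 0 ∧ (c.2 : ℕ) = (r : ℕ) then
    (1 - Foff q s N (r : ℕ) * Eoff q s N ((r : ℕ) - 1)) / Ediag s N (r : ℕ)
  else if c.1 = 1 ∧ (c.2 : ℕ) = (r : ℕ) - 1 then Foff q s N (r : ℕ)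
  else 0

/-- Upper-block entries `𝓔̄_{2+n,1+n}` of the intertwiner `𝓔̄^{(j-1/2)}` (here `N = 2j`). -/
def Ebdiag (N n : ℕ) : ℂ := ∏ p ∈ Finset.range n, s (N - 1 - p) (p + 2) / s (N - 1 - p) (p + 1)

/-- Lower-block entries `𝓔̄_{2j+2+m,1+m}` of `𝓔̄^{(j-1/2)}`. -/
def Eboff (N k : ℕ) : ℂ := qint q ((k : ℤ) - (N : ℤ)) * Ebdiag s N k / s (N - k) (k + 1)

/-- The intertwiner `𝓔̄^{(j-1/2)} : ℂ^{2j} → ℂ²⊗ℂ^{2j+1}`, `N = 2j`. -/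
def Ebar (N : ℕ) : Matrix (Fin 2 × Fin (N + 1)) (Fin N) ℂ := fun r c =>
  if r.1 = 0 then (if (r.2 : ℕ) = (c : ℕ) + 1 then Ebdiag s N (c : ℕ) else 0)
  else (if (r.2 : ℕ) = (c : ℕ) then Eboff q s N (c : ℕ) else 0)

/-- The entries `𝓕̄_{n,n+2j+1}` of the pseudo-inverse `𝓕̄^{(j-1/2)}` (here `k = n-1`). -/
def Fboff (N k : ℕ) : ℂ := Eboff q s N k / ((Ebdiag s N k) ^ 2 + (Eboff q s N k) ^ 2)

/-- The entries `𝓕̄_{n,n+1}` of `𝓕̄^{(j-1/2)}` (here `k = n-1`). -/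
def Fbdiag (N k : ℕ) : ℂ := (1 - Fboff q s N k * Eboff q s N k) / Ebdiag s N k

/-- The pseudo-inverse `𝓕̄^{(j-1/2)} : ℂ²⊗ℂ^{2j+1} → ℂ^{2j}`, `N = 2j`. -/
def Fbar (N : ℕ) : Matrix (Fin N) (Fin 2 × Fin (N + 1)) ℂ := fun r c =>
  if c.1 = 0 then (if (c.2 : ℕ) = (r : ℕ) + 1 then Fbdiag q s N (r : ℕ) else 0)
  else (if (c.2 : ℕ) = (r : ℕ) then Fboff q s N (r : ℕ) else 0)

end CMat

section PiMat
variable (q t : ℂ) (s : ℕ → ℕ → ℂ)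

/-- The matrix `π^j(E)` on `ℂ^{2j+1}` in the basis `|j,j⟩, …, |j,-j⟩` (here `N = 2j`):
`π^j(E)|j,m⟩ = A_{j,m}|j,m+1⟩` with `A_{j,m} = s (j-m) (j+m+1)`. -/
def piE (N : ℕ) : Matrix (Fin (N + 1)) (Fin (N + 1)) ℂ := fun i i' =>
  if (i' : ℕ) = (i : ℕ) + 1 then s ((i : ℕ) + 1) (N - (i : ℕ)) else 0

/-- The matrix `π^j(F)`: `π^j(F)|j,m⟩ = B_{j,m}|j,m-1⟩` with `B_{j,m} = s (j+m) (j-m+1)`. -/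
def piF (N : ℕ) : Matrix (Fin (N + 1)) (Fin (N + 1)) ℂ := fun i i' =>
  if (i : ℕ) = (i' : ℕ) + 1 then s (N - (i' : ℕ)) ((i' : ℕ) + 1) else 0

/-- The matrix `π^j(K^{ε/2}) = diag(q^{εm})`, written with `q^{1/2} = t`. -/
def piK (N : ℕ) (ε : ℤ) : Matrix (Fin (N + 1)) (Fin (N + 1)) ℂ :=
  Matrix.diagonal fun k => t ^ (ε * ((N : ℤ) - 2 * ((k : ℕ) : ℤ)))

/-- Diagonal exponents of `(I + σ_z ⊗ π^j(H))/2`, as powers of `t = q^{1/2}`. -/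
def Rexp (N : ℕ) (p : Fin 2 × Fin (N + 1)) : ℤ :=
  1 + (if p.1 = 0 then 1 else -1) * ((N : ℤ) - 2 * ((p.2 : ℕ) : ℤ))

/-- The Pauli matrix `σ₊`. -/
def sigp : Matrix (Fin 2) (Fin 2) ℂ := fun i j => if i = 0 ∧ j = 1 then 1 else 0

/-- The Pauli matrix `σ₋`. -/
def sigm : Matrix (Fin 2) (Fin 2) ℂ := fun i j => if i = 1 ∧ j = 0 then 1 else 0

/-- The explicit R-matrix `R^{(1/2,j)}(u)`, with `N = 2j` and `t = q^{1/2}`: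
`R^{(1/2,j)}(u) = (∏_{k=0}^{2j-2} c(uq^{j-1/2-k})) ((q-q⁻¹)(σ₊⊗π^j(F) + σ₋⊗π^j(E))
  + u q^{(I+σ_z⊗π^j(H))/2} - u⁻¹ q^{-(I+σ_z⊗π^j(H))/2})`. -/
def Rhalf (N : ℕ) (u : ℂ) : Matrix (Fin 2 × Fin (N + 1)) (Fin 2 × Fin (N + 1)) ℂ :=
  (∏ k ∈ Finset.range (N - 1),
      (u * t ^ ((N : ℤ) - 1 - 2 * (k : ℤ)) - u⁻¹ * t ^ (-((N : ℤ) - 1 - 2 * (k : ℤ))))) •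
    ((q - q⁻¹) • (sigp ⊗ₖ piF s N + sigm ⊗ₖ piE s N) +
      Matrix.diagonal fun p => u * t ^ Rexp N p - u⁻¹ * t ^ (-Rexp N p))

end PiMat

/-- The diagonal entries of `𝓗̄^{(j-1/2)}`, `N = 2j`: for `n = 1, …, 2j`,
`𝓗̄_n = (∏_{k=0}^{2j-2} c(q^{-k-1}))(q-q⁻¹) B_{j,-j+n}/(𝓔̄^{(j-1/2)}_{n+2j+1,n} 𝓕̄^{(j-1/2)}_{n,n+1})`. -/
def Hbdiag (q : ℂ) (s : ℕ → ℕ → ℂ) (N : ℕ) (r : Fin N) : ℂ :=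
  (∏ k ∈ Finset.range (N - 1), (q ^ (-((k : ℤ) + 1)) - q ^ ((k : ℤ) + 1))) *
    ((q - q⁻¹) * s ((r : ℕ) + 1) (N - (r : ℕ)) /
      (Eboff q s N (r : ℕ) * Fbdiag q s N (r : ℕ)))

/-!
At `u = q^{-j-1/2}` every factor `c(u q^{j-1/2-k})` of the scalar prefactor becomes `c(q^{-k-1})`,
and the remaining matrix is the direct sum of two zero `1 × 1` blocks (on `|↑,j⟩` and `|↓,-j⟩`)
and of the `2 × 2` blocks on `span(|↑,m⟩, |↓,m+1⟩)`. Each of those blocks is the rank-one matrix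
(column of `𝓔̄`) · `𝓗̄_n` · (row of `𝓕̄`): this comes down to `(𝓔̄_{2+n,1+n})² = [n+1]_q`,
`(𝓔̄_{2j+2+n,1+n})² = [2j-n]_q`, and the rows of `𝓕̄` being the columns of `𝓔̄` divided by
`[n+1]_q + [2j-n]_q ≠ 0`. As `𝓕̄ 𝓔̄ = 1` and `𝓗̄` is invertible, the rank is `2j`.
-/

theorem Matrix.rank_mul_mul_of_mul_eq_one {m n R : Type*} [Fintype m] [Fintype n]
    [DecidableEq n] [CommRing R] [StrongRankCondition R]
    {E : Matrix m n R} {F : Matrix n m R} (hFE : F * E = 1) (A : Matrix n n R) :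
    (E * A * F).rank = A.rank := by
  refine le_antisymm ((rank_mul_le_left _ _).trans (rank_mul_le_right _ _)) ?_
  calc A.rank = (F * E * A * (F * E)).rank := by rw [hFE, Matrix.one_mul, Matrix.mul_one]
    _ = (F * (E * A * F) * E).rank := by simp only [Matrix.mul_assoc]
    _ ≤ (E * A * F).rank := (rank_mul_le_left _ _).trans (rank_mul_le_right _ _)

section QNumber
variable {q : ℂ}

theorem qint_neg (n : ℤ) : qint q (-n) = -qint q n := by
  rw [qint, qint, neg_neg, ← neg_div, neg_sub]

theorem zpow_ne_one_of_ne_zero (hqru : ∀ n : ℕ, n ≠ 0 → q ^ n ≠ 1) {m : ℤ} (hm : m ≠ 0) :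
    q ^ m ≠ 1 := by
  obtain ⟨n, rfl | rfl⟩ := m.eq_nat_or_neg
  · exact_mod_cast hqru n (by omega)
  · rw [_root_.zpow_neg, inv_ne_one, zpow_natCast]
    exact hqru n (by omega)

variable (hq0 : q ≠ 0) (hqru : ∀ n : ℕ, n ≠ 0 → q ^ n ≠ 1)
include hq0 hqru

theorem sub_inv_ne_zero : q - q⁻¹ ≠ 0 :=
  sub_ne_zero.mpr fun h => hqru 2 two_ne_zero <| by
    rw [sq]; nth_rw 2 [h]; exact mul_inv_cancel₀ hq0

theorem sub_inv_mul_qint (n : ℤ) : (q - q⁻¹) * qint q n = q ^ n - q ^ (-n) :=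
  mul_div_cancel₀ _ (sub_inv_ne_zero hq0 hqru)

theorem qint_one : qint q 1 = 1 := by
  rw [qint, zpow_one, _root_.zpow_neg_one]
  exact div_self (sub_inv_ne_zero hq0 hqru)

theorem zpow_sub_zpow_neg_ne_zero {n : ℤ} (hn : n ≠ 0) : q ^ n - q ^ (-n) ≠ 0 := by
  refine sub_ne_zero.mpr fun h => zpow_ne_one_of_ne_zero hqru (show 2 * n ≠ 0 by omega) ?_
  rw [two_mul, zpow_add₀ hq0]
  nth_rw 1 [h]
  rw [← zpow_add₀ hq0, neg_add_cancel, zpow_zero]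

theorem qint_ne_zero {n : ℤ} (hn : n ≠ 0) : qint q n ≠ 0 :=
  right_ne_zero_of_mul <| (sub_inv_mul_qint hq0 hqru n).trans_ne <|
    zpow_sub_zpow_neg_ne_zero hq0 hqru hn

theorem qint_add_qint_ne_zero {a b : ℤ} (ha : 0 < a) (hb : 0 < b) :
    qint q a + qint q b ≠ 0 := by
  intro h
  have hsum : q ^ a - q ^ (-a) + (q ^ b - q ^ (-b)) = 0 := by
    rw [← sub_inv_mul_qint hq0 hqru, ← sub_inv_mul_qint hq0 hqru, ← mul_add, h, mul_zero]
  have hfac : (q ^ (a + b) - 1) * (q ^ a + q ^ b) = 0 := by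
    have := zpow_ne_zero a hq0
    have := zpow_ne_zero b hq0
    rw [_root_.zpow_neg, _root_.zpow_neg] at hsum
    rw [zpow_add₀ hq0]
    field_simp at hsum
    linear_combination hsum
  rcases mul_eq_zero.mp hfac with h1 | h2
  · exact zpow_ne_one_of_ne_zero hqru (show a + b ≠ 0 by omega) (sub_eq_zero.mp h1)
  · have hab : q ^ (2 * (a - b)) = 1 := by
      have := zpow_ne_zero b hq0
      rw [mul_sub, zpow_sub₀ hq0, two_mul, two_mul, zpow_add₀ hq0, zpow_add₀ hq0,
        eq_neg_of_add_eq_zero_left h2]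
      field_simp
    obtain rfl : a = b := by
      by_contra hne
      exact zpow_ne_one_of_ne_zero hqru (show 2 * (a - b) ≠ 0 by omega) hab
    exact zpow_ne_zero a hq0 (by linear_combination h2 / 2)

end QNumber

def fusionPrefactor (q : ℂ) (N : ℕ) : ℂ :=
  ∏ k ∈ Finset.range (N - 1), (q ^ (-((k : ℤ) + 1)) - q ^ ((k : ℤ) + 1))

theorem fusionPrefactor_ne_zero {q : ℂ} (hq0 : q ≠ 0) (hqru : ∀ n : ℕ, n ≠ 0 → q ^ n ≠ 1)
    (N : ℕ) : fusionPrefactor q N ≠ 0 :=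
  Finset.prod_ne_zero_iff.mpr fun k _ => by
    simpa using zpow_sub_zpow_neg_ne_zero hq0 hqru (n := -((k : ℤ) + 1)) (by omega)

def HbdiagCore (q : ℂ) (s : ℕ → ℕ → ℂ) (N : ℕ) (r : Fin N) : ℂ :=
  (q - q⁻¹) * s ((r : ℕ) + 1) (N - (r : ℕ)) / (Eboff q s N (r : ℕ) * Fbdiag q s N (r : ℕ))

theorem Hbdiag_eq_smul (q : ℂ) (s : ℕ → ℕ → ℂ) (N : ℕ) :
    Hbdiag q s N = fusionPrefactor q N • HbdiagCore q s N := rfl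

def weightExp (N : ℕ) (p : Fin 2 × Fin (N + 1)) : ℤ :=
  if p.1 = 0 then -(p.2 : ℤ) else (p.2 : ℤ) - N

theorem Rexp_eq (N : ℕ) (p : Fin 2 × Fin (N + 1)) : Rexp N p = N + 1 + 2 * weightExp N p := by
  rw [Rexp, weightExp]
  split_ifs <;> ring

def RhalfCore (q : ℂ) (s : ℕ → ℕ → ℂ) (N : ℕ) :
    Matrix (Fin 2 × Fin (N + 1)) (Fin 2 × Fin (N + 1)) ℂ :=
  (q - q⁻¹) • (sigp ⊗ₖ piF s N + sigm ⊗ₖ piE s N) +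
    diagonal fun p => q ^ weightExp N p - q ^ (-weightExp N p)

theorem zpow_neg_mul_zpow_sub_inv_mul_zpow_neg {q t : ℂ} (ht : t ^ 2 = q) (ht0 : t ≠ 0)
    {c a m : ℤ} (h : a = c + 2 * m) :
    t ^ (-c) * t ^ a - (t ^ (-c))⁻¹ * t ^ (-a) = q ^ m - q ^ (-m) := by
  rw [← _root_.zpow_neg, neg_neg, ← zpow_add₀ ht0, ← zpow_add₀ ht0, h,
    show -c + (c + 2 * m) = 2 * m by ring, show c + -(c + 2 * m) = 2 * -m by ring,
    _root_.zpow_mul, _root_.zpow_mul, zpow_two, ← sq, ht]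

theorem Rhalf_zpow_neg_succ {q t : ℂ} (s : ℕ → ℕ → ℂ) (N : ℕ) (hq0 : q ≠ 0) (ht : t ^ 2 = q) :
    Rhalf q t s N (t ^ (-((N : ℤ) + 1))) = fusionPrefactor q N • RhalfCore q s N := by
  have ht0 : t ≠ 0 := by rintro rfl; exact hq0 (by rw [← ht]; ring)
  rw [Rhalf, RhalfCore, fusionPrefactor]
  congr 1
  · refine Finset.prod_congr rfl fun k _ => ?_
    rw [zpow_neg_mul_zpow_sub_inv_mul_zpow_neg ht ht0 (m := -((k : ℤ) + 1)) (by ring), neg_neg]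
  · congr 2
    funext p
    exact zpow_neg_mul_zpow_sub_inv_mul_zpow_neg ht ht0 (Rexp_eq N p)

/-- The basis of `ℂ² ⊗ ℂ^{2j+1}` consists of `|↑,j⟩`, `|↓,-j⟩` and the pairs
`|↑,j-r-1⟩, |↓,j-r⟩` (`r < 2j`) spanning the blocks of `RhalfCore`. -/
theorem tensorIndex_induction {N : ℕ} {motive : Fin 2 × Fin (N + 1) → Prop}
    (top : motive (0, 0)) (bottom : motive (1, Fin.last N))
    (up : ∀ r : Fin N, motive (0, r.succ)) (down : ∀ r : Fin N, motive (1, r.castSucc)) :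
    ∀ p, motive p
  | (0, k) => Fin.cases top up k
  | (1, k) => Fin.lastCases bottom down k

section Entries
variable (q : ℂ) (s : ℕ → ℕ → ℂ) {N : ℕ} (r c : Fin N)

@[simp] theorem Ebar_zero_zero : Ebar q s N (0, 0) c = 0 := by simp [Ebar]

@[simp] theorem Ebar_one_last : Ebar q s N (1, Fin.last N) c = 0 := by simp [Ebar, c.isLt.ne']

@[simp] theorem Ebar_zero_succ :
    Ebar q s N (0, r.succ) c = if r = c then Ebdiag s N r else 0 := by
  rcases eq_or_ne r c with rfl | h <;> simp [Ebar, Fin.val_inj, *]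

@[simp] theorem Ebar_one_castSucc :
    Ebar q s N (1, r.castSucc) c = if r = c then Eboff q s N r else 0 := by
  rcases eq_or_ne r c with rfl | h <;> simp [Ebar, Fin.val_inj, *]

@[simp] theorem Fbar_zero_zero : Fbar q s N c (0, 0) = 0 := by simp [Fbar]

@[simp] theorem Fbar_one_last : Fbar q s N c (1, Fin.last N) = 0 := by simp [Fbar, c.isLt.ne']

@[simp] theorem Fbar_zero_succ :
    Fbar q s N c (0, r.succ) = if r = c then Fbdiag q s N r else 0 := by
  rcases eq_or_ne r c with rfl | h <;> simp [Fbar, Fin.val_inj, *]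

@[simp] theorem Fbar_one_castSucc :
    Fbar q s N c (1, r.castSucc) = if r = c then Fboff q s N r else 0 := by
  rcases eq_or_ne r c with rfl | h <;> simp [Fbar, Fin.val_inj, *]

@[simp] theorem weightExp_zero_zero : weightExp N (0, 0) = 0 := by simp [weightExp]

@[simp] theorem weightExp_one_last : weightExp N (1, Fin.last N) = 0 := by simp [weightExp]

@[simp] theorem weightExp_zero_succ : weightExp N (0, r.succ) = -(r + 1) := by simp [weightExp]

@[simp] theorem weightExp_one_castSucc : weightExp N (1, r.castSucc) = r - N := by
  simp [weightExp]

end Entries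

section Intertwiner
variable {q : ℂ} {s : ℕ → ℕ → ℂ} {N : ℕ}
  (hq0 : q ≠ 0) (hqru : ∀ n : ℕ, n ≠ 0 → q ^ n ≠ 1)
  (hs : ∀ a b : ℕ, s a b ^ 2 = qint q a * qint q b) (hssym : ∀ a b : ℕ, s a b = s b a)
include hq0 hqru hs

theorem sqrtQint_ne_zero {a b : ℕ} (ha : a ≠ 0) (hb : b ≠ 0) : s a b ≠ 0 := by
  intro h
  have := hs a b
  rw [h, zero_pow two_ne_zero] at this
  exact mul_ne_zero (qint_ne_zero hq0 hqru (by exact_mod_cast ha))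
    (qint_ne_zero hq0 hqru (by exact_mod_cast hb)) this.symm

theorem Ebdiag_sq {n : ℕ} (hn : n < N) : Ebdiag s N n ^ 2 = qint q (n + 1) := by
  induction n with
  | zero => simp [Ebdiag, qint_one hq0 hqru]
  | succ m ih =>
    have h₁ : qint q (N - 1 - m : ℕ) ≠ 0 := qint_ne_zero hq0 hqru (by omega)
    have h₂ : qint q (m + 1 : ℕ) ≠ 0 := qint_ne_zero hq0 hqru (by omega)
    rw [Ebdiag, Finset.prod_range_succ, ← Ebdiag, mul_pow, div_pow, ih (by omega), hs, hs]
    push_cast at h₂ ⊢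
    field_simp
    ring_nf

theorem Eboff_sq {k : ℕ} (hk : k < N) : Eboff q s N k ^ 2 = qint q (N - k) := by
  have h₁ : qint q (N - k) ≠ 0 := qint_ne_zero hq0 hqru (by omega)
  have h₂ : qint q (k + 1) ≠ 0 := qint_ne_zero hq0 hqru (by omega)
  rw [Eboff, div_pow, mul_pow, hs, Ebdiag_sq hq0 hqru hs hk,
    show (k : ℤ) - N = -(N - k) by ring, qint_neg, neg_sq]
  push_cast [Nat.cast_sub hk.le]
  field_simp

theorem Ebdiag_ne_zero {n : ℕ} (hn : n < N) : Ebdiag s N n ≠ 0 :=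
  pow_ne_zero_iff two_ne_zero |>.mp <| (Ebdiag_sq hq0 hqru hs hn).trans_ne <|
    qint_ne_zero hq0 hqru (by omega)

theorem Eboff_ne_zero {k : ℕ} (hk : k < N) : Eboff q s N k ≠ 0 :=
  pow_ne_zero_iff two_ne_zero |>.mp <| (Eboff_sq hq0 hqru hs hk).trans_ne <|
    qint_ne_zero hq0 hqru (by omega)

theorem Ebdiag_sq_add_Eboff_sq_ne_zero {k : ℕ} (hk : k < N) :
    Ebdiag s N k ^ 2 + Eboff q s N k ^ 2 ≠ 0 := by
  rw [Ebdiag_sq hq0 hqru hs hk, Eboff_sq hq0 hqru hs hk]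
  exact qint_add_qint_ne_zero hq0 hqru (by omega) (by omega)

theorem Fbdiag_eq {k : ℕ} (hk : k < N) :
    Fbdiag q s N k = Ebdiag s N k / (Ebdiag s N k ^ 2 + Eboff q s N k ^ 2) := by
  have := Ebdiag_ne_zero hq0 hqru hs hk
  have := Ebdiag_sq_add_Eboff_sq_ne_zero hq0 hqru hs hk
  rw [Fbdiag, Fboff]
  field_simp
  ring

theorem Fbdiag_ne_zero {k : ℕ} (hk : k < N) : Fbdiag q s N k ≠ 0 := by
  rw [Fbdiag_eq hq0 hqru hs hk]
  exact div_ne_zero (Ebdiag_ne_zero hq0 hqru hs hk) (Ebdiag_sq_add_Eboff_sq_ne_zero hq0 hqru hs hk)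

theorem sqrtQint_mul_Eboff {k : ℕ} (hk : k < N) :
    s (N - k) (k + 1) * Eboff q s N k = qint q (k - N) * Ebdiag s N k := by
  have := sqrtQint_ne_zero hq0 hqru hs (a := N - k) (b := k + 1) (by omega) (by omega)
  rw [Eboff]
  field_simp

theorem sqrtQint_mul_Ebdiag {k : ℕ} (hk : k < N) :
    s (N - k) (k + 1) * Ebdiag s N k = -qint q (k + 1) * Eboff q s N k := by
  have hsq := hs (N - k) (k + 1)
  push_cast [Nat.cast_sub hk.le] at hsq
  have hneg : qint q (k - N) = -qint q (N - k) := by rw [← qint_neg, neg_sub]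
  refine mul_left_cancel₀
    (sqrtQint_ne_zero hq0 hqru hs (a := N - k) (b := k + 1) (by omega) (by omega)) ?_
  linear_combination Ebdiag s N k * hsq + qint q (k + 1) * sqrtQint_mul_Eboff hq0 hqru hs hk +
    qint q (k + 1) * Ebdiag s N k * hneg

theorem Fbar_mul_Ebar : Fbar q s N * Ebar q s N = 1 := by
  ext r r'
  rw [Matrix.mul_apply, Fintype.sum_prod_type, Fin.sum_univ_two, Fin.sum_univ_succ,
    Fin.sum_univ_castSucc]
  rcases eq_or_ne r r' with rfl | h
  · simp [Fbdiag, div_mul_cancel₀ _ (Ebdiag_ne_zero hq0 hqru hs r.isLt)]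
  · simp [h, h.symm]

theorem HbdiagCore_ne_zero (r : Fin N) : HbdiagCore q s N r ≠ 0 :=
  div_ne_zero
    (mul_ne_zero (sub_inv_ne_zero hq0 hqru) (sqrtQint_ne_zero hq0 hqru hs (by omega) (by omega)))
    (mul_ne_zero (Eboff_ne_zero hq0 hqru hs r.isLt) (Fbdiag_ne_zero hq0 hqru hs r.isLt))

theorem Eboff_mul_HbdiagCore_mul_Fbdiag (r : Fin N) :
    Eboff q s N r * HbdiagCore q s N r * Fbdiag q s N r = (q - q⁻¹) * s (r + 1) (N - r) := by
  have := Eboff_ne_zero hq0 hqru hs r.isLt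
  have := Fbdiag_ne_zero hq0 hqru hs r.isLt
  rw [HbdiagCore]
  field_simp

include hssym

theorem Ebdiag_mul_HbdiagCore_mul_Fbdiag (r : Fin N) :
    Ebdiag s N r * HbdiagCore q s N r * Fbdiag q s N r =
      q ^ (-((r : ℤ) + 1)) - q ^ ((r : ℤ) + 1) := by
  have := Eboff_ne_zero hq0 hqru hs r.isLt
  have := Fbdiag_ne_zero hq0 hqru hs r.isLt
  calc Ebdiag s N r * HbdiagCore q s N r * Fbdiag q s N r
      = (q - q⁻¹) * (s (N - r) (r + 1) * Ebdiag s N r) / Eboff q s N r := by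
        rw [HbdiagCore, hssym (r + 1)]
        field_simp
    _ = -((q - q⁻¹) * qint q (r + 1)) := by
        rw [sqrtQint_mul_Ebdiag hq0 hqru hs r.isLt]
        field_simp
    _ = q ^ (-((r : ℤ) + 1)) - q ^ ((r : ℤ) + 1) := by
        rw [sub_inv_mul_qint hq0 hqru, neg_sub]

theorem Ebdiag_mul_HbdiagCore_mul_Fboff (r : Fin N) :
    Ebdiag s N r * HbdiagCore q s N r * Fboff q s N r = (q - q⁻¹) * s (N - r) (r + 1) := by
  have := Ebdiag_ne_zero hq0 hqru hs r.isLt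
  have := Eboff_ne_zero hq0 hqru hs r.isLt
  have := Ebdiag_sq_add_Eboff_sq_ne_zero hq0 hqru hs r.isLt
  rw [HbdiagCore, Fbdiag_eq hq0 hqru hs r.isLt, Fboff, hssym (r + 1)]
  field_simp

theorem Eboff_mul_HbdiagCore_mul_Fboff (r : Fin N) :
    Eboff q s N r * HbdiagCore q s N r * Fboff q s N r =
      q ^ ((r : ℤ) - N) - q ^ ((N : ℤ) - r) := by
  have := Ebdiag_ne_zero hq0 hqru hs r.isLt
  have := Eboff_ne_zero hq0 hqru hs r.isLt
  have := Ebdiag_sq_add_Eboff_sq_ne_zero hq0 hqru hs r.isLt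
  calc Eboff q s N r * HbdiagCore q s N r * Fboff q s N r
      = (q - q⁻¹) * (s (N - r) (r + 1) * Eboff q s N r) / Ebdiag s N r := by
        rw [HbdiagCore, Fbdiag_eq hq0 hqru hs r.isLt, Fboff, hssym (r + 1)]
        field_simp
    _ = (q - q⁻¹) * qint q (r - N) := by
        rw [sqrtQint_mul_Eboff hq0 hqru hs r.isLt]
        field_simp
    _ = q ^ ((r : ℤ) - N) - q ^ ((N : ℤ) - r) := by
        rw [sub_inv_mul_qint hq0 hqru, neg_sub]

theorem Ebar_mul_HbdiagCore_mul_Fbar :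
    Ebar q s N * diagonal (HbdiagCore q s N) * Fbar q s N = RhalfCore q s N := by
  ext p p'
  induction p using tensorIndex_induction <;> induction p' using tensorIndex_induction <;>
    simp [Matrix.mul_apply, diagonal_apply, RhalfCore, sigp, sigm, piE, piF, Fin.val_inj,
      (Fin.is_lt _).ne, -_root_.zpow_neg]
  -- what is left are the entries of the `2 × 2` blocks
  all_goals
    rename_i r r'
    rcases eq_or_ne r r' with rfl | h
    · simp [Ebdiag_mul_HbdiagCore_mul_Fbdiag hq0 hqru hs hssym,
        Ebdiag_mul_HbdiagCore_mul_Fboff hq0 hqru hs hssym,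
        Eboff_mul_HbdiagCore_mul_Fbdiag hq0 hqru hs,
        Eboff_mul_HbdiagCore_mul_Fboff hq0 hqru hs hssym, -_root_.zpow_neg]
    · simp [h, h.symm]

end Intertwiner

theorem statement8_general (q t : ℂ) (hq0 : q ≠ 0) (ht : t ^ 2 = q)
    (hqru : ∀ n : ℕ, n ≠ 0 → q ^ n ≠ 1)
    (s : ℕ → ℕ → ℂ) (hs : ∀ a b : ℕ, s a b ^ 2 = qint q (a : ℤ) * qint q (b : ℤ))
    (hssym : ∀ a b : ℕ, s a b = s b a)
    (N : ℕ) :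
    (Rhalf q t s N (t ^ (-((N : ℤ) + 1)))).rank = N ∧
    Rhalf q t s N (t ^ (-((N : ℤ) + 1))) =
      Ebar q s N * Matrix.diagonal (Hbdiag q s N) * Fbar q s N := by
  have hfactor : Rhalf q t s N (t ^ (-((N : ℤ) + 1))) =
      Ebar q s N * diagonal (Hbdiag q s N) * Fbar q s N := by
    rw [Rhalf_zpow_neg_succ s N hq0 ht, ← Ebar_mul_HbdiagCore_mul_Fbar hq0 hqru hs hssym,
      Hbdiag_eq_smul, diagonal_smul, Matrix.mul_smul, Matrix.smul_mul]
  refine ⟨?_, hfactor⟩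
  rw [hfactor, Matrix.rank_mul_mul_of_mul_eq_one (Fbar_mul_Ebar hq0 hqru hs), rank_of_isUnit,
    Fintype.card_fin]
  exact isUnit_diagonal.mpr <| Pi.isUnit_iff.mpr fun r =>
    (mul_ne_zero (fusionPrefactor_ne_zero hq0 hqru N) (HbdiagCore_ne_zero hq0 hqru hs r)).isUnit

/-- For every `j ∈ {1/2, 1, 3/2, …}` (with `N = 2j`), the matrix
`R^{(1/2,j)}(q^{-j-1/2})` has rank `2j` and factors as
`𝓔̄^{(j-1/2)} 𝓗̄^{(j-1/2)} 𝓕̄^{(j-1/2)}`. -/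
theorem statement8 (q t : ℂ) (hq0 : q ≠ 0) (ht : t ^ 2 = q)
    (hqru : ∀ n : ℕ, n ≠ 0 → q ^ n ≠ 1)
    (s : ℕ → ℕ → ℂ) (hs : ∀ a b : ℕ, s a b ^ 2 = qint q (a : ℤ) * qint q (b : ℤ))
    (hssym : ∀ a b : ℕ, s a b = s b a)
    (N : ℕ) (hN : 1 ≤ N) :
    (Rhalf q t s N (t ^ (-((N : ℤ) + 1)))).rank = N ∧
    Rhalf q t s N (t ^ (-((N : ℤ) + 1))) =
      Ebar q s N * Matrix.diagonal (Hbdiag q s N) * Fbar q s N :=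
  statement8_general q t hq0 ht hqru s hs hssym N
end
end

section
/- For every j ∈ {1/2, 1, 3/2, …}, the explicit R-matrix satisfies the unitarity property R^{(1/2,j)}(u)·R^{(1/2,j)}(u⁻¹) = ( ∏_{k=0}^{2j−1} c(uq^{j+1/2−k})·c(u⁻¹q^{j+1/2−k}) ) · I_{4j+2}, as an identity of matrices with entries in ℂ[u,u⁻¹] (equivalently, for every u ∈ ℂˣ). -/
noncomputable section
open Matrix
open scoped Kronecker

section Unitarity

lemma qint_zero (q : ℂ) : qint q 0 = 0 := by simp [qint]

lemma diag_id (t u : ℂ) (ht0 : t ≠ 0) (hu : u ≠ 0) (hqq : t^2 - (t^2)⁻¹ ≠ 0) (a b : ℤ) :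
    (t^2 - (t^2)⁻¹)^2 * (qint (t^2) a * qint (t^2) b) +
      (u * t^(b-a) - u⁻¹ * t^(-(b-a))) * (u⁻¹ * t^(b-a) - u * t^(-(b-a))) =
    (u * t^(a+b) - u⁻¹ * t^(-(a+b))) * (u⁻¹ * t^(a+b) - u * t^(-(a+b))) := by
  have h2 : ∀ n : ℤ, (t^2 : ℂ)^n = (t^n)^2 := by
    intro n
    rw [← zpow_natCast t 2, ← _root_.zpow_mul, mul_comm, _root_.zpow_mul, zpow_natCast]
  have e1 : t^(b-a) = t^b * t^(-a) := by rw [← zpow_add₀ ht0]; ring_nf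
  have e2 : t^(-(b-a)) = t^a * t^(-b) := by rw [← zpow_add₀ ht0]; ring_nf
  have e3 : (t : ℂ)^(a+b) = t^a * t^b := zpow_add₀ ht0 a b
  have e4 : t^(-(a+b)) = t^(-a) * t^(-b) := by rw [← zpow_add₀ ht0]; ring_nf
  have hcancel : ∀ w A B : ℂ, w ≠ 0 → w^2 * (A/w * (B/w)) = A * B := by
    intro w A B hw; field_simp
  unfold qint
  rw [e1, e2, e3, e4, h2 a, h2 b, h2 (-a), h2 (-b), hcancel _ _ _ hqq]
  linear_combination (-(((t^a)^2 - (t^(-a))^2) * ((t^b)^2 - (t^(-b))^2))) * mul_inv_cancel₀ hu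

lemma sigpp : sigp * sigp = 0 := by
  ext i j
  fin_cases i <;> fin_cases j <;>
    simp [Matrix.mul_apply, sigp, Fin.sum_univ_two]

lemma sigmm : sigm * sigm = 0 := by
  ext i j
  fin_cases i <;> fin_cases j <;>
    simp [Matrix.mul_apply, sigm, Fin.sum_univ_two]

lemma sigpm : sigp * sigm = Matrix.diagonal (fun a : Fin 2 => if a = 0 then 1 else 0) := by
  ext i j
  fin_cases i <;> fin_cases j <;>
    simp [Matrix.mul_apply, sigp, sigm, Fin.sum_univ_two, Matrix.diagonal]

lemma sigmp : sigm * sigp = Matrix.diagonal (fun a : Fin 2 => if a = 1 then 1 else 0) := by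
  ext i j
  fin_cases i <;> fin_cases j <;>
    simp [Matrix.mul_apply, sigp, sigm, Fin.sum_univ_two, Matrix.diagonal]

lemma piF_mul_piE (q : ℂ) (s : ℕ → ℕ → ℂ)
    (hs : ∀ a b : ℕ, s a b ^ 2 = qint q (a : ℤ) * qint q (b : ℤ))
    (hssym : ∀ a b : ℕ, s a b = s b a) (N : ℕ) :
    piF s N * piE s N =
      Matrix.diagonal (fun i : Fin (N+1) =>
        qint q ((i : ℕ) : ℤ) * qint q ((N : ℤ) + 1 - ((i : ℕ) : ℤ))) := by
  ext i i'
  rw [Matrix.mul_apply]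
  by_cases hi : (i : ℕ) = 0
  · rw [Finset.sum_eq_zero (fun k _ => by
      simp only [piF]; rw [if_neg (by omega)]; exact zero_mul _)]
    rw [Matrix.diagonal_apply]
    split_ifs with h
    · simp [hi, qint_zero]
    · rfl
  · have hi1 : (i : ℕ) - 1 < N + 1 := by omega
    rw [Finset.sum_eq_single (⟨(i : ℕ) - 1, hi1⟩ : Fin (N + 1))
      (fun k _ hk => by
        simp only [piF]
        rw [if_neg (fun h => hk (Fin.ext (by simpa using by omega)))]
        exact zero_mul _)
      (fun h => absurd (Finset.mem_univ _) h)]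
    simp only [piF, piE]
    rw [if_pos (by simpa using by omega)]
    by_cases h' : i' = i
    · subst h'
      rw [if_pos (by simpa using by omega), Matrix.diagonal_apply_eq]
      rw [show (N - ((i' : ℕ) - 1) : ℕ) = N + 1 - (i' : ℕ) by omega,
        show ((i' : ℕ) - 1 + 1 : ℕ) = (i' : ℕ) by omega,
        hssym (N + 1 - (i' : ℕ)), ← pow_two, hs]
      congr 1
      congr 1
      omega
    · rw [if_neg (by simpa using by omega),
        Matrix.diagonal_apply_ne _ (fun hh => h' hh.symm), mul_zero]

lemma piE_mul_piF (q : ℂ) (s : ℕ → ℕ → ℂ)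
    (hs : ∀ a b : ℕ, s a b ^ 2 = qint q (a : ℤ) * qint q (b : ℤ))
    (hssym : ∀ a b : ℕ, s a b = s b a) (N : ℕ) :
    piE s N * piF s N =
      Matrix.diagonal (fun i : Fin (N+1) =>
        qint q (((i : ℕ) : ℤ) + 1) * qint q ((N : ℤ) - ((i : ℕ) : ℤ))) := by
  ext i i'
  rw [Matrix.mul_apply]
  by_cases hi : (i : ℕ) = N
  · rw [Finset.sum_eq_zero (fun k _ => by
      simp only [piE]; rw [if_neg (by omega)]; exact zero_mul _)]
    rw [Matrix.diagonal_apply]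
    split_ifs with h
    · rw [show ((N : ℤ) - ((i : ℕ) : ℤ)) = 0 by omega, qint_zero, mul_zero]
    · rfl
  · have hi1 : (i : ℕ) + 1 < N + 1 := by omega
    rw [Finset.sum_eq_single (⟨(i : ℕ) + 1, hi1⟩ : Fin (N + 1))
      (fun k _ hk => by
        simp only [piE]
        rw [if_neg (fun h => hk (Fin.ext (by simpa using by omega)))]
        exact zero_mul _)
      (fun h => absurd (Finset.mem_univ _) h)]
    simp only [piF, piE]
    rw [if_pos (by simpa using by omega)]
    by_cases h' : i' = i
    · subst h'
      rw [if_pos (by simpa using by omega), Matrix.diagonal_apply_eq]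
      rw [hssym (N - _), ← pow_two, hs]
      rw [show ((((i':ℕ)+1 : ℕ)) : ℤ) = ((i':ℕ):ℤ)+1 by omega,
        show ((N - (i':ℕ) : ℕ) : ℤ) = (N:ℤ) - ((i':ℕ):ℤ) by omega]
    · rw [if_neg (by simpa using by omega),
        Matrix.diagonal_apply_ne _ (fun hh => h' hh.symm), mul_zero]

lemma cross_zero (t u : ℂ) (s : ℕ → ℕ → ℂ) (N : ℕ) :
    (sigp ⊗ₖ piF s N + sigm ⊗ₖ piE s N) *
        (Matrix.diagonal fun p => u⁻¹ * t ^ Rexp N p - (u⁻¹)⁻¹ * t ^ (-Rexp N p)) +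
      (Matrix.diagonal fun p => u * t ^ Rexp N p - u⁻¹ * t ^ (-Rexp N p)) *
        (sigp ⊗ₖ piF s N + sigm ⊗ₖ piE s N) = 0 := by
  ext p p'
  obtain ⟨a, i⟩ := p
  obtain ⟨b, k⟩ := p'
  simp only [Matrix.add_apply, Matrix.mul_diagonal, Matrix.diagonal_mul,
    Matrix.kroneckerMap_apply, Matrix.zero_apply, inv_inv]
  fin_cases a <;> fin_cases b <;> simp only [sigp, sigm] <;>
    norm_num
  · -- a = 0, b = 1 : piF block
    by_cases h : (i : ℕ) = (k : ℕ) + 1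
    · have hR : Rexp N ((1 : Fin 2), k) = -(Rexp N ((0 : Fin 2), i)) := by
        simp only [Rexp]
        norm_num
        omega
      simp only [piF, if_pos h, hR, neg_neg, _root_.zpow_neg, inv_inv]
      ring
    · simp [piF, h]
  · -- a = 1, b = 0 : piE block
    by_cases h : (k : ℕ) = (i : ℕ) + 1
    · have hR : Rexp N ((0 : Fin 2), k) = -(Rexp N ((1 : Fin 2), i)) := by
        simp only [Rexp]
        norm_num
        omega
      simp only [piE, if_pos h, hR, neg_neg, _root_.zpow_neg, inv_inv]
      ring
    · simp [piE, h]

lemma SS_diag (q : ℂ) (s : ℕ → ℕ → ℂ)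
    (hs : ∀ a b : ℕ, s a b ^ 2 = qint q (a : ℤ) * qint q (b : ℤ))
    (hssym : ∀ a b : ℕ, s a b = s b a) (N : ℕ) :
    (sigp ⊗ₖ piF s N + sigm ⊗ₖ piE s N) * (sigp ⊗ₖ piF s N + sigm ⊗ₖ piE s N) =
      Matrix.diagonal (fun p : Fin 2 × Fin (N+1) =>
        if p.1 = 0 then qint q ((p.2 : ℕ) : ℤ) * qint q ((N : ℤ) + 1 - ((p.2 : ℕ) : ℤ))
        else qint q (((p.2 : ℕ) : ℤ) + 1) * qint q ((N : ℤ) - ((p.2 : ℕ) : ℤ))) := by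
  rw [add_mul, mul_add, mul_add, ← Matrix.mul_kronecker_mul, ← Matrix.mul_kronecker_mul,
    ← Matrix.mul_kronecker_mul, ← Matrix.mul_kronecker_mul,
    sigpp, sigmm, sigpm, sigmp, piF_mul_piE q s hs hssym N, piE_mul_piF q s hs hssym N,
    Matrix.zero_kronecker, Matrix.zero_kronecker,
    Matrix.diagonal_kronecker_diagonal, Matrix.diagonal_kronecker_diagonal,
    zero_add, add_zero, Matrix.diagonal_add]
  apply congrArg Matrix.diagonal
  funext p
  obtain ⟨a, i⟩ := p
  fin_cases a <;> simp

end Unitarity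

/-- For every `j ∈ {1/2, 1, 3/2, …}` (with `N = 2j`) and every `u ∈ ℂˣ`,
the explicit R-matrix satisfies the unitarity property
`R^{(1/2,j)}(u) R^{(1/2,j)}(u⁻¹) = (∏_{k=0}^{2j-1} c(uq^{j+1/2-k}) c(u⁻¹q^{j+1/2-k})) I_{4j+2}`. -/
theorem statement9 (q t : ℂ) (hq0 : q ≠ 0) (ht : t ^ 2 = q)
    (hqru : ∀ n : ℕ, n ≠ 0 → q ^ n ≠ 1)
    (s : ℕ → ℕ → ℂ) (hs : ∀ a b : ℕ, s a b ^ 2 = qint q (a : ℤ) * qint q (b : ℤ))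
    (hssym : ∀ a b : ℕ, s a b = s b a)
    (N : ℕ) (hN : 1 ≤ N) :
    ∀ u : ℂ, u ≠ 0 →
      Rhalf q t s N u * Rhalf q t s N u⁻¹ =
        (∏ k ∈ Finset.range N,
            ((u * t ^ ((N : ℤ) + 1 - 2 * (k : ℤ)) - u⁻¹ * t ^ (-((N : ℤ) + 1 - 2 * (k : ℤ)))) *
              (u⁻¹ * t ^ ((N : ℤ) + 1 - 2 * (k : ℤ)) - u * t ^ (-((N : ℤ) + 1 - 2 * (k : ℤ)))))) •
          (1 : Matrix (Fin 2 × Fin (N + 1)) (Fin 2 × Fin (N + 1)) ℂ) := by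
  intro u hu
  have ht0 : t ≠ 0 := fun h => hq0 (by rw [← ht, h]; ring)
  have hu' : u⁻¹ ≠ 0 := inv_ne_zero hu
  have hqq : q - q⁻¹ ≠ 0 := by
    intro h
    apply hqru 2 two_ne_zero
    have h1 : q = q⁻¹ := sub_eq_zero.mp h
    rw [pow_two]
    nth_rewrite 2 [h1]
    exact mul_inv_cancel₀ hq0
  have hqq' : t ^ 2 - (t ^ 2)⁻¹ ≠ 0 := by rw [ht]; exact hqq
  have key :
      ((q - q⁻¹) • (sigp ⊗ₖ piF s N + sigm ⊗ₖ piE s N) +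
          Matrix.diagonal fun p => u * t ^ Rexp N p - u⁻¹ * t ^ (-Rexp N p)) *
        ((q - q⁻¹) • (sigp ⊗ₖ piF s N + sigm ⊗ₖ piE s N) +
          Matrix.diagonal fun p => u⁻¹ * t ^ Rexp N p - (u⁻¹)⁻¹ * t ^ (-Rexp N p)) =
      ((u * t ^ ((N : ℤ) + 1) - u⁻¹ * t ^ (-((N : ℤ) + 1))) *
          (u⁻¹ * t ^ ((N : ℤ) + 1) - u * t ^ (-((N : ℤ) + 1)))) •
        (1 : Matrix (Fin 2 × Fin (N + 1)) (Fin 2 × Fin (N + 1)) ℂ) := by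
    have expand : ∀ (A D1 D2 : Matrix (Fin 2 × Fin (N+1)) (Fin 2 × Fin (N+1)) ℂ),
        (A + D1) * (A + D2) = (A * A + D1 * D2) + (A * D2 + D1 * A) := by
      intros A D1 D2; noncomm_ring
    rw [expand]
    rw [smul_mul_smul_comm]
    rw [smul_mul_assoc, mul_smul_comm, ← smul_add, cross_zero t u s N, smul_zero, add_zero]
    rw [SS_diag q s hs hssym N, Matrix.diagonal_mul_diagonal,
      ← Matrix.diagonal_smul, Matrix.diagonal_add]
    rw [show ((u * t ^ ((N : ℤ) + 1) - u⁻¹ * t ^ (-((N : ℤ) + 1))) *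
          (u⁻¹ * t ^ ((N : ℤ) + 1) - u * t ^ (-((N : ℤ) + 1)))) •
        (1 : Matrix (Fin 2 × Fin (N + 1)) (Fin 2 × Fin (N + 1)) ℂ) =
        Matrix.diagonal (fun _ => (u * t ^ ((N : ℤ) + 1) - u⁻¹ * t ^ (-((N : ℤ) + 1))) *
          (u⁻¹ * t ^ ((N : ℤ) + 1) - u * t ^ (-((N : ℤ) + 1)))) from by
      rw [← Matrix.diagonal_one, ← Matrix.diagonal_smul]
      apply congrArg Matrix.diagonal
      funext p
      simp]
    apply congrArg Matrix.diagonal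
    funext p
    obtain ⟨a, i⟩ := p
    simp only [Pi.smul_apply, Pi.add_apply, smul_eq_mul, inv_inv]
    rw [← ht]
    fin_cases a
    · simp only [Rexp, if_pos rfl]
      norm_num
      linear_combination (norm := ring_nf) diag_id t u ht0 hu hqq' ((i : ℕ) : ℤ)
        (((N : ℕ) : ℤ) + 1 - ((i : ℕ) : ℤ))
    · simp only [Rexp, show ((1 : Fin 2) = 0) = False by simp, if_false]
      norm_num
      linear_combination (norm := ring_nf) diag_id t u ht0 hu hqq' (((N : ℕ) : ℤ) - ((i : ℕ) : ℤ))
        (((i : ℕ) : ℤ) + 1)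
  simp only [Rhalf]
  rw [smul_mul_smul_comm, key, smul_smul]
  congr 1
  obtain ⟨M0, rfl⟩ : ∃ M0, N = M0 + 1 := ⟨N - 1, by omega⟩
  rw [Finset.prod_range_succ', show (M0 + 1) - 1 = M0 from rfl, ← Finset.prod_mul_distrib]
  congr 1
  refine Finset.prod_congr rfl (fun k _ => ?_)
  rw [inv_inv]
  push_cast
  ring
end
end

section
/- Let Z be a commutative unital ℂ-algebra and let F(u) = Σ_{k≥0} F_k u^{−2k} be a formal power series with coefficients F_k ∈ Z and constant term F₀ = −(ρq^{1/2}/(q−q⁻¹)²)·1 (an invertible scalar multiple of the identity). Suppose ν(u) ∈ Z((u⁻¹)) is an invertible formal Laurent series in u⁻¹ satisfying the functional relation F(u)·ν(u)·ν(uq) = 1, where ν(uq) is obtained from ν(u) by the substitution u ↦ uq. Then ν(u) is a power series supported in even nonpositive degrees, ν(u) = Σ_{k≥0} ν_k u^{−2k}; its constant term satisfies ν₀² = −ρ⁻¹q^{−1/2}(q−q⁻¹)², and all higher coefficients are determined recursively by ν_k = −F₀⁻¹·Σ_{ℓ=0}^{k−1} ((1−q^{−2(k+ℓ)})/(1−q^{−4k}))·F_{k−ℓ}·ν_ℓ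 for k ≥ 1. -/
/-!
Substituting `u ↦ uq` in `F(u) ν(u) ν(uq) = 1` and dividing the two relations eliminates `ν(uq)`:
`F(u) ν(u) = F(uq) ν(uq²)`. At the least exponent `b` outside `2ℕ` where `ν` is nonzero, only
`F₀ ν_b` contributes to either side, so `(1 - q^{-2b}) F₀ ν_b = 0`; as `q` is not a root of unity
and `F₀` is invertible, `ν` is even. The constant coefficient of the original relation then gives
`F₀ ν₀² = 1`, and the coefficient of `u^{-2k}` in the eliminated relation, with the term
`(1 - q^{-4k}) F₀ ν_k` split off, is the recursion.
-/

noncomputable section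

lemma isPWO_Ici (a : ℤ) : (Set.Ici a).IsPWO :=
  Set.IsWF.isPWO (BddBelow.wellFoundedOn_lt bddBelow_Ici)

section HahnDefs
variable {B : Type*} [Ring B] [Algebra ℂ B]

/-- The formal power series in `u⁻¹` with coefficient `c n` at `u^{-n}`, as a formal Laurent
series.  Throughout, the coefficient of a Hahn series at `m : ℤ` represents the coefficient
of `u^{-m}` (so that bounded-below supports means finitely many positive powers of `u`). -/
def mkS (c : ℕ → B) : HahnSeries ℤ B :=
  ⟨fun m => if 0 ≤ m then c m.toNat else 0, by
    apply (isPWO_Ici 0).mono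
    intro m hm
    rw [Set.mem_Ici]
    by_contra h
    push_neg at h
    exact hm (if_neg (not_le.mpr h))⟩

/-- The series `u` itself (coefficient `1` at Hahn degree `-1`). -/
def uS (B : Type*) [Ring B] : HahnSeries ℤ B := HahnSeries.single (-1) 1

/-- The series `u⁻¹`. -/
def uiS (B : Type*) [Ring B] : HahnSeries ℤ B := HahnSeries.single 1 1

/-- The substitution `u ↦ u t^a` on formal Laurent series, acting on the coefficient of
`u^{-m}` by the scalar `t^{-am}`. -/
def shf (t : ℂ) (a : ℤ) (f : HahnSeries ℤ B) : HahnSeries ℤ B :=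
  ⟨fun m => t ^ (-(a * m)) • f.coeff m, by
    apply f.isPWO_support.mono
    intro m hm
    simp only [Function.mem_support, ne_eq] at hm ⊢
    exact fun h => hm (by rw [h, smul_zero])⟩

end HahnDefs

/-- The formal power series `F(u) = ∑_{k≥0} F_k u^{-2k}` attached to the even coefficient
family `Fc`. -/
def mkEv {Z : Type*} [CommRing Z] (Fc : ℕ → Z) : HahnSeries ℤ Z :=
  ⟨fun m => if 0 ≤ m ∧ 2 ∣ m then Fc (m / 2).toNat else 0, by
    apply (isPWO_Ici 0).mono
    intro m hm
    rw [Set.mem_Ici]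
    by_contra h
    push_neg at h
    exact hm (if_neg (by omega))⟩

section Preliminaries

lemma zpow_ne_one_of_not_isOfFinOrder {G₀ : Type*} [GroupWithZero G₀] {q : G₀}
    (hq : ¬ IsOfFinOrder q) {n : ℤ} (hn : n ≠ 0) : q ^ n ≠ 1 := by
  intro h
  refine hq (isOfFinOrder_iff_pow_eq_one.2 ⟨n.natAbs, Int.natAbs_pos.2 hn, ?_⟩)
  cases n with
  | ofNat m => simpa using h
  | negSucc m => simpa [zpow_negSucc] using h

lemma add_inv_ne_zero_of_not_isOfFinOrder {K : Type*} [Field K] {q : K} (hq0 : q ≠ 0)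
    (hq : ¬ IsOfFinOrder q) : q + q⁻¹ ≠ 0 := by
  intro h
  have hsq : q ^ 2 = -1 := by
    field_simp at h
    linear_combination h
  exact hq (isOfFinOrder_iff_pow_eq_one.2 ⟨4, by norm_num, by linear_combination (q ^ 2 - 1) * hsq⟩)

lemma sub_inv_ne_zero_of_not_isOfFinOrder {K : Type*} [Field K] {q : K} (hq0 : q ≠ 0)
    (hq : ¬ IsOfFinOrder q) : q - q⁻¹ ≠ 0 := by
  intro h
  have hsq : q ^ 2 = 1 := by
    field_simp at h
    linear_combination h
  exact hq (isOfFinOrder_iff_pow_eq_one.2 ⟨2, by norm_num, hsq⟩)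

/-- The exponents `m = 2k`, `k ≥ 0`, i.e. the `u`-degrees `-2k` of an even power series in `u⁻¹`. -/
def evenNonneg : Set ℤ := {m | 0 ≤ m ∧ 2 ∣ m}

lemma add_mem_evenNonneg {a b : ℤ} (ha : a ∈ evenNonneg) (hb : b ∈ evenNonneg) :
    a + b ∈ evenNonneg :=
  ⟨add_nonneg ha.1 hb.1, dvd_add ha.2 hb.2⟩

end Preliminaries

namespace HahnSeries

variable {R : Type*} [CommRing R]

lemma coeff_mul_eq_sum_antidiagonal_of_support_subset {x y : HahnSeries ℤ R} {s t : Set ℤ}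
    (hs : s.IsPWO) (ht : t.IsPWO) (hxs : x.support ⊆ s) (hyt : y.support ⊆ t) (a : ℤ) :
    (x * y).coeff a = ∑ ij ∈ Finset.antidiagonal hs ht a, x.coeff ij.1 * y.coeff ij.2 := by
  rw [coeff_mul]
  refine Finset.sum_subset ((Finset.antidiagonal_mono_left (hu := x.isPWO_support) hxs).trans
    (Finset.antidiagonal_mono_right (hu := y.isPWO_support) hyt)) ?_
  intro ij hij hij'
  by_contra hne
  exact hij' (Finset.mem_antidiagonal.2
    ⟨left_ne_zero_of_mul hne, right_ne_zero_of_mul hne, (Finset.mem_antidiagonal.1 hij).2.2⟩)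

lemma support_mul_subset_evenNonneg {x y : HahnSeries ℤ R} (hx : x.support ⊆ evenNonneg)
    (hy : y.support ⊆ evenNonneg) : (x * y).support ⊆ evenNonneg := by
  intro m hm
  obtain ⟨i, hi, j, hj, rfl⟩ := support_mul_subset hm
  exact add_mem_evenNonneg (hx hi) (hy hj)

lemma coeff_two_mul_mul_of_support_subset_evenNonneg {x y : HahnSeries ℤ R}
    (hx : x.support ⊆ evenNonneg) (hy : y.support ⊆ evenNonneg) (k : ℕ) :
    (x * y).coeff (2 * k) =
      ∑ l ∈ Finset.range (k + 1), x.coeff (2 * (k - l : ℕ)) * y.coeff (2 * l) := by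
  rw [coeff_mul]
  symm
  refine Finset.sum_bij_ne_zero (fun l _ _ => ((2 * (k - l : ℕ) : ℤ), (2 * l : ℤ)))
    ?_ ?_ ?_ (fun _ _ _ => rfl)
  · intro l hl hne
    rw [Finset.mem_range] at hl
    refine Finset.mem_antidiagonal.2 ⟨left_ne_zero_of_mul hne, right_ne_zero_of_mul hne, ?_⟩
    push_cast [Nat.cast_sub (Nat.lt_succ_iff.1 hl)]
    ring
  · intro a _ _ b _ _ hab
    simp only [Prod.mk.injEq] at hab
    omega
  · intro ij hij hne
    obtain ⟨hi, hj, hsum⟩ := Finset.mem_antidiagonal.1 hij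
    obtain ⟨hi0, hi2⟩ := hx hi
    obtain ⟨hj0, hj2⟩ := hy hj
    have h1 : (2 * (k - (ij.2 / 2).toNat : ℕ) : ℤ) = ij.1 := by omega
    have h2 : (2 * (ij.2 / 2).toNat : ℤ) = ij.2 := by omega
    exact ⟨(ij.2 / 2).toNat, Finset.mem_range.2 (by omega), by rwa [h1, h2], Prod.ext h1 h2⟩

lemma coeff_zero_mul_of_support_subset_evenNonneg {x y : HahnSeries ℤ R}
    (hx : x.support ⊆ evenNonneg) (hy : y.support ⊆ evenNonneg) :
    (x * y).coeff 0 = x.coeff 0 * y.coeff 0 := by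
  simpa using coeff_two_mul_mul_of_support_subset_evenNonneg hx hy 0

lemma coeff_mul_eq_coeff_zero_mul_of_notMem_evenNonneg {x y : HahnSeries ℤ R}
    (hx : x.support ⊆ evenNonneg) {b : ℤ} (hb : b ∉ evenNonneg)
    (hy : ∀ j ∈ y.support, j < b → j ∈ evenNonneg) :
    (x * y).coeff b = x.coeff 0 * y.coeff b := by
  rw [coeff_mul]
  refine Finset.sum_eq_single ((0 : ℤ), b) ?_ ?_
  · rintro ⟨i, j⟩ hij hne
    obtain ⟨hi, hj, hsum⟩ := Finset.mem_antidiagonal.1 hij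
    have hi' := hx hi
    have hi0 : i ≠ 0 := fun h => hne (by simp only [h, Prod.mk.injEq, true_and]; omega)
    have hj' := hy j hj (by have := hi'.1; omega)
    exact absurd (hsum ▸ add_mem_evenNonneg hi' hj') hb
  · intro h
    by_contra hne
    exact h (Finset.mem_antidiagonal.2
      ⟨left_ne_zero_of_mul hne, right_ne_zero_of_mul hne, zero_add b⟩)

end HahnSeries

section Substitution

variable {R : Type*} [CommRing R] [Algebra ℂ R]

lemma shf_coeff (t : ℂ) (a : ℤ) (f : HahnSeries ℤ R) (m : ℤ) :
    (shf t a f).coeff m = t ^ (-(a * m)) • f.coeff m := rfl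

lemma support_shf_subset (t : ℂ) (a : ℤ) (f : HahnSeries ℤ R) :
    (shf t a f).support ⊆ f.support := fun m hm h => hm (by rw [shf_coeff, h, smul_zero])

lemma shf_one (t : ℂ) (a : ℤ) : shf t a (1 : HahnSeries ℤ R) = 1 := by
  ext m
  rw [shf_coeff, HahnSeries.coeff_one]
  split_ifs with h
  · simp [h]
  · exact smul_zero _

lemma shf_mul {t : ℂ} (ht : t ≠ 0) (a : ℤ) (x y : HahnSeries ℤ R) :
    shf t a (x * y) = shf t a x * shf t a y := by
  ext m
  rw [shf_coeff, HahnSeries.coeff_mul, Finset.smul_sum,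
    HahnSeries.coeff_mul_eq_sum_antidiagonal_of_support_subset x.isPWO_support y.isPWO_support
      (support_shf_subset t a x) (support_shf_subset t a y)]
  refine Finset.sum_congr rfl fun ij hij => ?_
  rw [shf_coeff, shf_coeff, smul_mul_smul_comm, ← zpow_add₀ ht,
    ← (Finset.mem_antidiagonal.1 hij).2.2, mul_add, neg_add]

lemma mul_eq_shf_mul_shf_shf {q : ℂ} (hq : q ≠ 0) {F ν : HahnSeries ℤ R}
    (h : F * ν * shf q 1 ν = 1) : F * ν = shf q 1 F * shf q 1 (shf q 1 ν) := by
  have h' : shf q 1 F * shf q 1 ν * shf q 1 (shf q 1 ν) = 1 := by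
    rw [← shf_mul hq, ← shf_mul hq, h, shf_one]
  calc F * ν = F * ν * (shf q 1 F * shf q 1 ν * shf q 1 (shf q 1 ν)) := by rw [h', mul_one]
    _ = F * ν * shf q 1 ν * (shf q 1 F * shf q 1 (shf q 1 ν)) := by ring
    _ = shf q 1 F * shf q 1 (shf q 1 ν) := by rw [h, one_mul]

end Substitution

section EvenSeries

variable {R : Type*} [CommRing R]

lemma support_mkEv_subset (Fc : ℕ → R) : (mkEv Fc).support ⊆ evenNonneg :=
  fun _ hm => by_contra fun h => hm (if_neg h)

lemma mkEv_coeff_two_mul (Fc : ℕ → R) (n : ℕ) : (mkEv Fc).coeff (2 * n) = Fc n := by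
  simp [mkEv]

lemma mkEv_coeff_zero (Fc : ℕ → R) : (mkEv Fc).coeff 0 = Fc 0 := by
  simpa using mkEv_coeff_two_mul Fc 0

end EvenSeries

section FunctionalEquation

variable {R : Type*} [CommRing R] [Algebra ℂ R]

theorem support_subset_evenNonneg_of_mul_mul_shf_eq_one {q : ℂ} (hq0 : q ≠ 0)
    (hq : ¬ IsOfFinOrder q) {Fc : ℕ → R} (hF0 : IsUnit (Fc 0)) {ν : HahnSeries ℤ R}
    (h : mkEv Fc * ν * shf q 1 ν = 1) : ν.support ⊆ evenNonneg := by
  have hFν := mul_eq_shf_mul_shf_shf hq0 h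
  by_contra hsub
  obtain ⟨m, hm, hm'⟩ := Set.not_subset.1 hsub
  have hwf : (ν.support \ evenNonneg).IsWF := ν.isPWO_support.isWF.mono Set.sdiff_subset
  have hne : (ν.support \ evenNonneg).Nonempty := ⟨m, hm, hm'⟩
  set b := hwf.min hne
  obtain ⟨hb, hb'⟩ : b ∈ ν.support \ evenNonneg := hwf.min_mem hne
  have hbelow : ∀ j ∈ ν.support, j < b → j ∈ evenNonneg :=
    fun j hj hjb => by_contra fun h => hwf.not_lt_min hne ⟨hj, h⟩ hjb
  have hb0 : b ≠ 0 := fun h0 => hb' (h0 ▸ ⟨le_rfl, dvd_zero 2⟩)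
  have hcoeff : (mkEv Fc * ν).coeff b = (shf q 1 (mkEv Fc) * shf q 1 (shf q 1 ν)).coeff b := by
    rw [hFν]
  rw [HahnSeries.coeff_mul_eq_coeff_zero_mul_of_notMem_evenNonneg (support_mkEv_subset Fc) hb'
      hbelow,
    HahnSeries.coeff_mul_eq_coeff_zero_mul_of_notMem_evenNonneg
      ((support_shf_subset q 1 _).trans (support_mkEv_subset Fc)) hb'
      fun j hj => hbelow j (support_shf_subset q 1 ν (support_shf_subset q 1 _ hj)),
    shf_coeff, shf_coeff, shf_coeff, smul_smul, ← zpow_add₀ hq0] at hcoeff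
  simp only [mul_zero, neg_zero, zpow_zero, one_smul, mkEv_coeff_zero] at hcoeff
  have hfix : (1 - q ^ (-(1 * b) + -(1 * b))) • ν.coeff b = 0 := by
    rw [sub_smul, one_smul, hF0.mul_left_cancel hcoeff.symm, sub_self]
  refine hb ((smul_eq_zero.1 hfix).resolve_left (sub_ne_zero.2 ?_))
  exact (zpow_ne_one_of_not_isOfFinOrder hq (by omega)).symm

theorem coeff_zero_sq_of_mul_mul_shf_eq_one {q c : ℂ} (hc : c ≠ 0) {Fc : ℕ → R}
    (hF0 : Fc 0 = algebraMap ℂ R c) {ν : HahnSeries ℤ R} (hν : ν.support ⊆ evenNonneg)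
    (h : mkEv Fc * ν * shf q 1 ν = 1) : ν.coeff 0 ^ 2 = algebraMap ℂ R c⁻¹ := by
  have h0 : (mkEv Fc * ν * shf q 1 ν).coeff 0 = 1 := by simp [h]
  rw [HahnSeries.coeff_zero_mul_of_support_subset_evenNonneg
      (HahnSeries.support_mul_subset_evenNonneg (support_mkEv_subset Fc) hν)
      ((support_shf_subset q 1 ν).trans hν),
    HahnSeries.coeff_zero_mul_of_support_subset_evenNonneg (support_mkEv_subset Fc) hν,
    mkEv_coeff_zero, shf_coeff, mul_zero, neg_zero, zpow_zero, one_smul] at h0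
  calc ν.coeff 0 ^ 2 = algebraMap ℂ R c⁻¹ * (algebraMap ℂ R c * ν.coeff 0 ^ 2) := by
        rw [← mul_assoc, ← map_mul, inv_mul_cancel₀ hc, map_one, one_mul]
    _ = algebraMap ℂ R c⁻¹ := by rw [← hF0, sq, ← mul_assoc (Fc 0), h0, mul_one]

theorem sum_one_sub_zpow_smul_eq_zero_of_mul_mul_shf_eq_one {q : ℂ} (hq0 : q ≠ 0)
    {Fc : ℕ → R} {ν : HahnSeries ℤ R} (hν : ν.support ⊆ evenNonneg)
    (h : mkEv Fc * ν * shf q 1 ν = 1) (k : ℕ) :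
    ∑ l ∈ Finset.range (k + 1),
      (1 - q ^ (-(2 * ((k : ℤ) + l)))) • (Fc (k - l) * ν.coeff (2 * l)) = 0 := by
  have hcoeff : (mkEv Fc * ν).coeff (2 * k) =
      (shf q 1 (mkEv Fc) * shf q 1 (shf q 1 ν)).coeff (2 * k) := by
    rw [mul_eq_shf_mul_shf_shf hq0 h]
  rw [HahnSeries.coeff_two_mul_mul_of_support_subset_evenNonneg (support_mkEv_subset Fc) hν,
    HahnSeries.coeff_two_mul_mul_of_support_subset_evenNonneg
      ((support_shf_subset q 1 _).trans (support_mkEv_subset Fc))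
      ((support_shf_subset q 1 _).trans ((support_shf_subset q 1 ν).trans hν))] at hcoeff
  simp only [sub_smul, one_smul, Finset.sum_sub_distrib, sub_eq_zero]
  simp only [mkEv_coeff_two_mul, shf_coeff] at hcoeff
  refine hcoeff.trans (Finset.sum_congr rfl fun l hl => ?_)
  have hlk : l ≤ k := Nat.lt_succ_iff.1 (Finset.mem_range.1 hl)
  rw [smul_smul, smul_mul_smul_comm, ← zpow_add₀ hq0, ← zpow_add₀ hq0, Nat.cast_sub hlk]
  ring_nf

theorem coeff_two_mul_eq_smul_sum_of_mul_mul_shf_eq_one {q c : ℂ} (hq0 : q ≠ 0)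
    (hq : ¬ IsOfFinOrder q) (hc : c ≠ 0) {Fc : ℕ → R} (hF0 : Fc 0 = algebraMap ℂ R c)
    {ν : HahnSeries ℤ R} (hν : ν.support ⊆ evenNonneg) (h : mkEv Fc * ν * shf q 1 ν = 1)
    {k : ℕ} (hk : 1 ≤ k) :
    ν.coeff (2 * (k : ℤ)) = (-c⁻¹) • ∑ l ∈ Finset.range k,
      ((1 - q ^ (-(2 * ((k : ℤ) + (l : ℤ))))) / (1 - q ^ (-(4 * (k : ℤ))))) •
        (Fc (k - l) * ν.coeff (2 * (l : ℤ))) := by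
  have hsum := sum_one_sub_zpow_smul_eq_zero_of_mul_mul_shf_eq_one hq0 hν h k
  rw [Finset.sum_range_succ, Nat.sub_self, hF0, ← Algebra.smul_def,
    show -(2 * ((k : ℤ) + k)) = -(4 * k) by ring] at hsum
  have hd : 1 - q ^ (-(4 * (k : ℤ))) ≠ 0 :=
    sub_ne_zero.2 (zpow_ne_one_of_not_isOfFinOrder hq (by omega)).symm
  simp only [div_eq_inv_mul, mul_smul, ← Finset.smul_sum]
  rw [eq_neg_of_add_eq_zero_left hsum, smul_neg, smul_smul, inv_mul_cancel₀ hd, one_smul,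
    smul_neg, neg_smul, neg_neg, smul_smul, inv_mul_cancel₀ hc, one_smul]

end FunctionalEquation

theorem statement19_general (q t kp km : ℂ) (hq0 : q ≠ 0) (ht : t ^ 2 = q)
    (hqru : ∀ n : ℕ, n ≠ 0 → q ^ n ≠ 1)
    (hkp : kp ≠ 0) (hkm : km ≠ 0)
    (Z : Type*) [CommRing Z] [Algebra ℂ Z]
    (Fc : ℕ → Z)
    (hF0 : Fc 0 = algebraMap ℂ Z (-(kp * km * (q + q⁻¹) ^ 2 * t) / (q - q⁻¹) ^ 2))
    (ν : HahnSeries ℤ Z)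
    (hrel : mkEv Fc * ν * shf q 1 ν = 1) :
    (∀ m : ℤ, ν.coeff m ≠ 0 → 0 ≤ m ∧ 2 ∣ m) ∧
    ν.coeff 0 ^ 2 = algebraMap ℂ Z (-(q - q⁻¹) ^ 2 / (kp * km * (q + q⁻¹) ^ 2 * t)) ∧
    (∀ k : ℕ, 1 ≤ k →
      ν.coeff (2 * (k : ℤ)) =
        (-((-(kp * km * (q + q⁻¹) ^ 2 * t) / (q - q⁻¹) ^ 2)⁻¹) : ℂ) •
          ∑ l ∈ Finset.range k,
            (((1 - q ^ (-(2 * ((k : ℤ) + (l : ℤ))))) / (1 - q ^ (-(4 * (k : ℤ))))) : ℂ) •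
              (Fc (k - l) * ν.coeff (2 * (l : ℤ)))) := by
  have hq : ¬ IsOfFinOrder q := fun h => by
    obtain ⟨n, hn, h1⟩ := isOfFinOrder_iff_pow_eq_one.1 h
    exact hqru n hn.ne' h1
  have ht0 : t ≠ 0 := by
    rintro rfl
    exact hq0 (by simp [← ht])
  have hc : -(kp * km * (q + q⁻¹) ^ 2 * t) / (q - q⁻¹) ^ 2 ≠ 0 := by
    have := add_inv_ne_zero_of_not_isOfFinOrder hq0 hq
    have := sub_inv_ne_zero_of_not_isOfFinOrder hq0 hq
    simp [*]
  have hsupp := support_subset_evenNonneg_of_mul_mul_shf_eq_one hq0 hq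
    (hF0 ▸ (IsUnit.mk0 _ hc).map (algebraMap ℂ Z)) hrel
  refine ⟨hsupp, ?_, fun k hk =>
    coeff_two_mul_eq_smul_sum_of_mul_mul_shf_eq_one hq0 hq hc hF0 hsupp hrel hk⟩
  rw [coeff_zero_sq_of_mul_mul_shf_eq_one hc hF0 hsupp hrel, inv_div, div_neg, neg_div]

/-- Let `Z` be a commutative ℂ-algebra, `F(u) = ∑_k F_k u^{-2k}` with
`F₀ = -(ρ q^{1/2}/(q-q⁻¹)²)·1` (where `ρ = k₊k₋(q+q⁻¹)²` and `q^{1/2} = t`), and let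
`ν(u) ∈ Z((u⁻¹))` be an invertible formal Laurent series with `F(u)ν(u)ν(uq) = 1` (the
substitution `u ↦ uq` acting coefficientwise).  Then `ν` is supported in even nonpositive
`u`-degrees, `ν₀² = -ρ⁻¹q^{-1/2}(q-q⁻¹)²`, and
`ν_k = -F₀⁻¹ ∑_{ℓ=0}^{k-1} ((1-q^{-2(k+ℓ)})/(1-q^{-4k})) F_{k-ℓ} ν_ℓ` for `k ≥ 1`. -/
theorem statement19 (q t kp km : ℂ) (hq0 : q ≠ 0) (ht : t ^ 2 = q)
    (hqru : ∀ n : ℕ, n ≠ 0 → q ^ n ≠ 1)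
    (hkp : kp ≠ 0) (hkm : km ≠ 0)
    (Z : Type*) [CommRing Z] [Algebra ℂ Z]
    (Fc : ℕ → Z)
    (hF0 : Fc 0 = algebraMap ℂ Z (-(kp * km * (q + q⁻¹) ^ 2 * t) / (q - q⁻¹) ^ 2))
    (ν : HahnSeries ℤ Z) (hν : IsUnit ν)
    (hrel : mkEv Fc * ν * shf q 1 ν = 1) :
    (∀ m : ℤ, ν.coeff m ≠ 0 → 0 ≤ m ∧ 2 ∣ m) ∧
    ν.coeff 0 ^ 2 = algebraMap ℂ Z (-(q - q⁻¹) ^ 2 / (kp * km * (q + q⁻¹) ^ 2 * t)) ∧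
    (∀ k : ℕ, 1 ≤ k →
      ν.coeff (2 * (k : ℤ)) =
        (-((-(kp * km * (q + q⁻¹) ^ 2 * t) / (q - q⁻¹) ^ 2)⁻¹) : ℂ) •
          ∑ l ∈ Finset.range k,
            (((1 - q ^ (-(2 * ((k : ℤ) + (l : ℤ))))) / (1 - q ^ (-(4 * (k : ℤ))))) : ℂ) •
              (Fc (k - l) * ν.coeff (2 * (l : ℤ)))) :=
  statement19_general q t kp km hq0 ht hqru hkp hkm Z Fc hF0 ν hrel
end
end
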